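/- arXiv:2412.10880 — 16 statements merged into one kernel-verified Lean document; each statement's English description precedes it below -/
import Mathlib

section
/- For all x with 0 < x < π/2, we have x > 3·sin(x)/(2 + cos(x)). -/
/-!
Set `g₁ x = sin x - x cos x`, `g₂ x = 2 - 2 cos x - x sin x` and `g₃ x = x (2 + cos x) - 3 sin x`.
All three vanish at `0`, and `g₁' x = x sin x`, `g₂' = g₁`, `g₃' = g₂`; since `x sin x > 0` on
`(0, π)`, positivity propagates from each function to the next, giving `g₃ > 0` on `(0, π]`.
Beyond `π` the inequality is trivial, as `3 sin x ≤ 3 < π < x ≤ x (2 + cos x)`.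
-/

open Real Set

lemma pos_of_zero_of_hasDerivAt_pos {f f' : ℝ → ℝ} {a x : ℝ} (hf : ∀ y, HasDerivAt f (f' y) y)
    (hf0 : f 0 = 0) (hf' : ∀ y ∈ Ioo 0 a, 0 < f' y) (hx : x ∈ Ioc 0 a) : 0 < f x := by
  have hmono : StrictMonoOn f (Icc 0 a) := by
    refine strictMonoOn_of_deriv_pos (convex_Icc 0 a)
      (continuous_iff_continuousAt.2 fun y ↦ (hf y).continuousAt).continuousOn fun y hy ↦ ?_
    rw [interior_Icc] at hy
    exact (hf y).deriv ▸ hf' y hy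
  simpa [hf0] using hmono (left_mem_Icc.2 (hx.1.le.trans hx.2)) (Ioc_subset_Icc_self hx) hx.1

namespace Real

lemma mul_cos_lt_sin {x : ℝ} (h0 : 0 < x) (hπ : x ≤ π) : x * cos x < sin x := by
  have hderiv (y : ℝ) : HasDerivAt (fun y ↦ sin y - y * cos y) (y * sin y) y :=
    ((hasDerivAt_sin y).sub ((hasDerivAt_id' y).mul (hasDerivAt_cos y))).congr_deriv (by ring)
  have := pos_of_zero_of_hasDerivAt_pos hderiv (by simp)
    (fun y hy ↦ mul_pos hy.1 (sin_pos_of_pos_of_lt_pi hy.1 hy.2)) ⟨h0, hπ⟩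
  linarith

lemma mul_sin_lt_two_sub_two_mul_cos {x : ℝ} (h0 : 0 < x) (hπ : x ≤ π) :
    x * sin x < 2 - 2 * cos x := by
  have hderiv (y : ℝ) :
      HasDerivAt (fun y ↦ 2 - 2 * cos y - y * sin y) (sin y - y * cos y) y :=
    ((((hasDerivAt_cos y).const_mul 2).const_sub 2).sub
      ((hasDerivAt_id' y).mul (hasDerivAt_sin y))).congr_deriv (by ring)
  have := pos_of_zero_of_hasDerivAt_pos hderiv (by simp)
    (fun y hy ↦ sub_pos.2 (mul_cos_lt_sin hy.1 hy.2.le)) ⟨h0, hπ⟩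
  linarith

lemma three_mul_sin_lt_mul_two_add_cos {x : ℝ} (h0 : 0 < x) : 3 * sin x < x * (2 + cos x) := by
  rcases le_or_gt x π with hπ | hπ
  · have hderiv (y : ℝ) :
        HasDerivAt (fun y ↦ y * (2 + cos y) - 3 * sin y) (2 - 2 * cos y - y * sin y) y :=
      (((hasDerivAt_id' y).mul ((hasDerivAt_cos y).const_add 2)).sub
        ((hasDerivAt_sin y).const_mul 3)).congr_deriv (by ring)
    have := pos_of_zero_of_hasDerivAt_pos hderiv (by simp)
      (fun y hy ↦ sub_pos.2 (mul_sin_lt_two_sub_two_mul_cos hy.1 hy.2.le)) ⟨h0, hπ⟩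
    linarith
  · nlinarith [sin_le_one x, neg_one_le_cos x, pi_gt_three]

end Real

theorem cusa_lower_bound_general (x : ℝ) (h0 : 0 < x) :
    x > 3 * Real.sin x / (2 + Real.cos x) := by
  have hcos : 0 < 2 + Real.cos x := by linarith [Real.neg_one_le_cos x]
  rw [gt_iff_lt, div_lt_iff₀ hcos]
  exact Real.three_mul_sin_lt_mul_two_add_cos h0

theorem cusa_lower_bound (x : ℝ) (h0 : 0 < x) (h1 : x < Real.pi / 2) :
    x > 3 * Real.sin x / (2 + Real.cos x) :=
  cusa_lower_bound_general x h0
end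

section
/- For all x with 0 < x < π/2, we have x < (2·sin(x) + tan(x))/3. -/
/-! The gap `2 sin t + tan t - 3 t` vanishes at `0` and has derivative `2 c + 1 / c ^ 2 - 3` with
`c = cos t`, which is positive for `0 < c < 1` because `2 c ^ 3 - 3 c ^ 2 + 1 = (c - 1) ^ 2 (2 c + 1)`.
Hence the gap is strictly increasing on `[0, π/2)`. -/

open Real Set

lemma three_lt_two_mul_add_one_div_sq {c : ℝ} (hc : 0 < c) (hc1 : c ≠ 1) :
    3 < 2 * c + 1 / c ^ 2 := by
  have hsq : 0 < (c - 1) ^ 2 := sq_pos_iff.mpr (sub_ne_zero.mpr hc1)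
  rw [← sub_pos, show 2 * c + 1 / c ^ 2 - 3 = (c - 1) ^ 2 * (2 * c + 1) / c ^ 2 by
    field_simp; ring]
  exact div_pos (mul_pos hsq (by positivity)) (by positivity)

noncomputable def snellGap (t : ℝ) : ℝ := 2 * sin t + tan t - 3 * t

lemma hasDerivAt_snellGap {t : ℝ} (ht : cos t ≠ 0) :
    HasDerivAt snellGap (2 * cos t + 1 / cos t ^ 2 - 3) t := by
  have h := (((hasDerivAt_sin t).const_mul 2).add (hasDerivAt_tan ht)).sub
    ((hasDerivAt_id t).const_mul 3)
  rwa [mul_one] at h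

lemma strictMonoOn_snellGap : StrictMonoOn snellGap (Ico 0 (π / 2)) := by
  have hcos : ∀ t ∈ Ico 0 (π / 2), 0 < cos t := fun t ht =>
    cos_pos_of_mem_Ioo ⟨by linarith [ht.1, pi_pos], ht.2⟩
  refine strictMonoOn_of_deriv_pos (convex_Ico _ _) (fun t ht => ?_) fun t ht => ?_
  · exact (hasDerivAt_snellGap (hcos t ht).ne').continuousAt.continuousWithinAt
  · rw [interior_Ico] at ht
    have hc1 : cos t ≠ 1 := by
      have := cos_lt_cos_of_nonneg_of_le_pi le_rfl (by linarith [pi_gt_three, ht.2]) ht.1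
      rw [cos_zero] at this
      exact this.ne
    rw [(hasDerivAt_snellGap (hcos t (Ioo_subset_Ico_self ht)).ne').deriv, sub_pos]
    exact three_lt_two_mul_add_one_div_sq (hcos t (Ioo_subset_Ico_self ht)) hc1

theorem snell_upper_bound (x : ℝ) (h0 : 0 < x) (h1 : x < Real.pi / 2) :
    x < (2 * Real.sin x + Real.tan x) / 3 := by
  have hgap : snellGap 0 < snellGap x :=
    strictMonoOn_snellGap ⟨le_rfl, by positivity⟩ ⟨h0.le, h1⟩ h0
  simp only [snellGap, sin_zero, tan_zero] at hgap
  linarith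
end

section
/- For all x with 0 < x < π, we have x < sin(x) + 10·(4·sin(x/2)² − sin(x)²)/(12·sin(x/2) + 9·sin(x)). -/
/-!
Write `t = x / 2`, `s = sin t`, `c = cos t`. Since `sin x = 2 s c` and `4 s² - sin² x = 4 s⁴`,
the right-hand side is `2 s c + 20 s³ / (3 (2 + 3 c))`. The difference between this and `2 t`
vanishes at `t = 0` and has derivative `4 s² (1 - c)² / (2 + 3 c)²`, which is positive on
`(0, π / 2)`.
-/

open Real Set

noncomputable def huygensGap (t : ℝ) : ℝ :=
  2 * sin t * cos t + 20 * sin t ^ 3 / (3 * (2 + 3 * cos t)) - 2 * t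

theorem hasDerivAt_huygensGap {t : ℝ} (ht : 2 + 3 * cos t ≠ 0) :
    HasDerivAt huygensGap (4 * sin t ^ 2 * (1 - cos t) ^ 2 / (2 + 3 * cos t) ^ 2) t := by
  have hden : 3 * (2 + 3 * cos t) ≠ 0 := mul_ne_zero three_ne_zero ht
  have h := ((((hasDerivAt_sin t).const_mul 2).fun_mul (hasDerivAt_cos t)).fun_add
    ((((hasDerivAt_sin t).fun_pow 3).const_mul 20).fun_div
      (((hasDerivAt_cos t).const_mul 3).const_add 2 |>.const_mul 3) hden)).fun_sub
    ((hasDerivAt_id' t).const_mul 2)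
  refine h.congr_deriv ?_
  have ht' : 2 + cos t * 3 ≠ 0 := by rwa [mul_comm]
  push_cast
  field_simp
  linear_combination (20 * sin t ^ 2 + 8 + 24 * cos t + 18 * cos t ^ 2) *
    sin_sq_add_cos_sq t

theorem two_add_three_mul_cos_pos {t : ℝ} (ht : t ∈ Icc 0 (π / 2)) : 0 < 2 + 3 * cos t := by
  have := cos_nonneg_of_mem_Icc ⟨by linarith [ht.1, pi_pos], ht.2⟩
  positivity

theorem strictMonoOn_huygensGap : StrictMonoOn huygensGap (Icc 0 (π / 2)) := by
  refine strictMonoOn_of_deriv_pos (convex_Icc _ _) (fun t ht => ?_) (fun t ht => ?_)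
  · exact (hasDerivAt_huygensGap (two_add_three_mul_cos_pos ht).ne').continuousAt.continuousWithinAt
  · rw [interior_Icc] at ht
    have hpos := two_add_three_mul_cos_pos (Ioo_subset_Icc_self ht)
    have hsin : 0 < sin t := sin_pos_of_pos_of_lt_pi ht.1 (by linarith [ht.2, pi_pos])
    have hcos : cos t < 1 := by
      simpa using cos_lt_cos_of_nonneg_of_le_pi_div_two le_rfl ht.2.le ht.1
    rw [(hasDerivAt_huygensGap hpos.ne').deriv]
    have : 0 < 1 - cos t := by linarith
    positivity

theorem huygensGap_pos {t : ℝ} (h0 : 0 < t) (h1 : t < π / 2) : 0 < huygensGap t := by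
  have := strictMonoOn_huygensGap ⟨le_rfl, by linarith [pi_pos]⟩ ⟨h0.le, h1.le⟩ h0
  simpa [huygensGap] using this

/-- With Lean's `a / 0 = 0`, both sides are `0` when `sin (x / 2) = 0` or
`2 + 3 cos (x / 2) = 0`. -/
theorem huygens_barycentric_eq_half_angle (x : ℝ) :
    sin x + 10 * (4 * sin (x / 2) ^ 2 - sin x ^ 2) / (12 * sin (x / 2) + 9 * sin x) =
      2 * sin (x / 2) * cos (x / 2) + 20 * sin (x / 2) ^ 3 / (3 * (2 + 3 * cos (x / 2))) := by
  set s := sin (x / 2)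
  set c := cos (x / 2)
  have hsin : sin x = 2 * s * c := by rw [← sin_two_mul, mul_div_cancel₀ x two_ne_zero]
  have hnum : 4 * s ^ 2 - (2 * s * c) ^ 2 = 4 * s ^ 4 := by
    linear_combination (-4) * s ^ 2 * sin_sq_add_cos_sq (x / 2)
  rw [hsin, hnum]
  rcases eq_or_ne s 0 with hs | hs
  · simp [hs]
  · rw [show 12 * s + 9 * (2 * s * c) = (2 * s) * (3 * (2 + 3 * c)) by ring,
      show 10 * (4 * s ^ 4) = (2 * s) * (20 * s ^ 3) by ring,
      mul_div_mul_left _ _ (mul_ne_zero two_ne_zero hs)]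

theorem huygens_upper_barycentric (x : ℝ) (h0 : 0 < x) (h1 : x < Real.pi) :
    x < Real.sin x +
      10 * (4 * Real.sin (x / 2) ^ 2 - Real.sin x ^ 2) /
        (12 * Real.sin (x / 2) + 9 * Real.sin x) := by
  rw [huygens_barycentric_eq_half_angle]
  have := huygensGap_pos (t := x / 2) (by linarith) (by linarith)
  rw [huygensGap] at this
  linarith
end

section
/- For all x with 0 < x < π, we have x > sin(x) + 10·(4·sin(x/2)² − sin(x)²) / (12·sin(x/2) + 9·sin(x) + 8·(2·sin(x/2) − sin(x))²/(12·sin(x/2) + 9·sin(x))). -/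
/-!
Put `t = x / 2`, `s = sin t`, `c = cos t`, so that `sin x = 2 s c`. Clearing the positive
denominators turns the inequality into `s * huygensNum c < t * huygensDen c` for `0 < t < π / 2`.
Both cubics are increasing in `c` on the relevant range, so it suffices to bound `sin t` above by
its Taylor polynomial of degree 5 and `cos t` above and below by those of degrees 4 and 6; the
resulting polynomial gap is `t ^ 7` times a quintic in `t ^ 2` that stays above `1 / 4` on
`[0, 5 / 2]`. The Taylor bounds are the alternating bracketing of `sin` and `cos` by their partial
sums on `[0, ∞)`, obtained by integrating each bound of one function to get the next of the other.
-/

open Real Finset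
open scoped Nat

noncomputable def sinTaylor (n : ℕ) (x : ℝ) : ℝ :=
  ∑ k ∈ range n, (-1 : ℝ) ^ k * x ^ (2 * k + 1) / (2 * k + 1)!

noncomputable def cosTaylor (n : ℕ) (x : ℝ) : ℝ :=
  ∑ k ∈ range n, (-1 : ℝ) ^ k * x ^ (2 * k) / (2 * k)!

@[simp] lemma sinTaylor_apply_zero (n : ℕ) : sinTaylor n 0 = 0 := by
  simp [sinTaylor]

@[simp] lemma cosTaylor_succ_apply_zero (n : ℕ) : cosTaylor (n + 1) 0 = 1 := by
  simp [cosTaylor, sum_range_succ']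

lemma hasDerivAt_sinTaylor (n : ℕ) (x : ℝ) : HasDerivAt (sinTaylor n) (cosTaylor n x) x := by
  unfold sinTaylor cosTaylor
  refine HasDerivAt.fun_sum fun k _ => ?_
  refine (((hasDerivAt_pow (2 * k + 1) x).const_mul ((-1 : ℝ) ^ k)).div_const
    ((2 * k + 1)! : ℝ)).congr_deriv ?_
  rw [Nat.factorial_succ]
  push_cast
  field_simp

lemma hasDerivAt_cosTaylor_succ (n : ℕ) (x : ℝ) :
    HasDerivAt (cosTaylor (n + 1)) (-sinTaylor n x) x := by
  have hshift : cosTaylor (n + 1) =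
      fun y : ℝ =>
        ∑ k ∈ range n, (-1 : ℝ) ^ (k + 1) * y ^ (2 * (k + 1)) / (2 * (k + 1))! + 1 := by
    funext y
    simp only [cosTaylor, sum_range_succ']
    simp
  rw [hshift, sinTaylor, ← sum_neg_distrib]
  refine (HasDerivAt.fun_sum fun k _ => ?_).add_const 1
  refine (((hasDerivAt_pow (2 * (k + 1)) x).const_mul ((-1 : ℝ) ^ (k + 1))).div_const
    ((2 * (k + 1))! : ℝ)).congr_deriv ?_
  rw [show 2 * (k + 1) = 2 * k + 1 + 1 by ring, Nat.factorial_succ]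
  push_cast
  field_simp
  ring

lemma nonneg_of_hasDerivAt_of_map_zero {f f' : ℝ → ℝ} (hf : ∀ x, HasDerivAt f (f' x) x)
    (hf' : ∀ x, 0 < x → 0 ≤ f' x) (h0 : f 0 = 0) {x : ℝ} (hx : 0 ≤ x) : 0 ≤ f x := by
  have hmono : MonotoneOn f (Set.Ici 0) :=
    monotoneOn_of_hasDerivWithinAt_nonneg (convex_Ici 0)
      (fun y _ => (hf y).continuousAt.continuousWithinAt)
      (fun y _ => (hf y).hasDerivWithinAt)
      (fun y hy => hf' y (by simpa using hy))
  exact h0 ▸ hmono Set.self_mem_Ici hx hx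

lemma neg_one_pow_mul_sin_sub_sinTaylor_nonneg_of_cos {n : ℕ}
    (hcos : ∀ y, 0 ≤ y → 0 ≤ (-1) ^ n * (cos y - cosTaylor n y)) {x : ℝ} (hx : 0 ≤ x) :
    0 ≤ (-1) ^ n * (sin x - sinTaylor n x) :=
  nonneg_of_hasDerivAt_of_map_zero
    (fun y => ((hasDerivAt_sin y).sub (hasDerivAt_sinTaylor n y)).const_mul _)
    (fun y hy => hcos y hy.le) (by simp) hx

lemma neg_one_pow_mul_cos_sub_cosTaylor_nonneg_of_sin {n : ℕ}
    (hsin : ∀ y, 0 ≤ y → 0 ≤ (-1) ^ n * (sin y - sinTaylor n y)) {x : ℝ} (hx : 0 ≤ x) :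
    0 ≤ (-1) ^ (n + 1) * (cos x - cosTaylor (n + 1) x) :=
  nonneg_of_hasDerivAt_of_map_zero
    (fun y => ((hasDerivAt_cos y).sub (hasDerivAt_cosTaylor_succ n y)).const_mul _)
    (fun y hy => by convert hsin y hy.le using 1; ring) (by simp) hx

theorem neg_one_pow_mul_cos_sub_cosTaylor_nonneg (n : ℕ) {x : ℝ} (hx : 0 ≤ x) :
    0 ≤ (-1) ^ (n + 1) * (cos x - cosTaylor (n + 1) x) := by
  induction n generalizing x with
  | zero => simpa [cosTaylor] using cos_le_one x
  | succ n ih =>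
    exact neg_one_pow_mul_cos_sub_cosTaylor_nonneg_of_sin
      (fun y hy => neg_one_pow_mul_sin_sub_sinTaylor_nonneg_of_cos (fun z hz => ih hz) hy) hx

theorem neg_one_pow_mul_sin_sub_sinTaylor_nonneg (n : ℕ) {x : ℝ} (hx : 0 ≤ x) :
    0 ≤ (-1) ^ (n + 1) * (sin x - sinTaylor (n + 1) x) :=
  neg_one_pow_mul_sin_sub_sinTaylor_nonneg_of_cos
    (fun _ hy => neg_one_pow_mul_cos_sub_cosTaylor_nonneg n hy) hx

def huygensNum (c : ℝ) : ℝ := 60 + 134 * c + 32 * c ^ 2 - c ^ 3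

def huygensDen (c : ℝ) : ℝ := 44 + 92 * c + 89 * c ^ 2

lemma huygensDen_pos (c : ℝ) : 0 < huygensDen c := by
  unfold huygensDen
  nlinarith [sq_nonneg (89 * c + 46)]

lemma huygensDen_monotoneOn : MonotoneOn huygensDen (Set.Ici (-1 / 2)) := by
  intro a ha b hb hab
  simp only [huygensDen, Set.mem_Ici] at *
  nlinarith [mul_nonneg (sub_nonneg.2 hab) (by linarith : (0 : ℝ) ≤ 92 + 89 * (a + b))]

lemma huygensNum_monotoneOn : MonotoneOn huygensNum (Set.Icc (-1) 1) := by
  rintro a ⟨ha₀, ha₁⟩ b ⟨hb₀, hb₁⟩ hab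
  have hfactor : 0 ≤ 134 + 32 * (a + b) - (a ^ 2 + a * b + b ^ 2) := by nlinarith
  simp only [huygensNum]
  nlinarith [mul_nonneg (sub_nonneg.2 hab) hfactor]

lemma sinTaylor_mul_huygensNum_lt {t : ℝ} (ht : 0 < t) (ht2 : t ^ 2 ≤ 5 / 2) :
    sinTaylor 3 t * huygensNum (cosTaylor 3 t) < t * huygensDen (cosTaylor 4 t) := by
  set u := t ^ 2
  have hu0 : 0 ≤ u := sq_nonneg t
  have hK : 0 < 3/8 - 143/2880 * u - 1/1440 * u ^ 2 + 269/518400 * u ^ 3 - 7/207360 * u ^ 4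
      + 1/1658880 * u ^ 5 := by
    nlinarith [pow_nonneg hu0 3, pow_nonneg hu0 5, mul_le_mul_of_nonneg_left ht2 (pow_nonneg hu0 3)]
  have hgap : t * huygensDen (cosTaylor 4 t) - sinTaylor 3 t * huygensNum (cosTaylor 3 t) =
      t ^ 7 * (3/8 - 143/2880 * u - 1/1440 * u ^ 2 + 269/518400 * u ^ 3 - 7/207360 * u ^ 4
        + 1/1658880 * u ^ 5) := by
    simp only [sinTaylor, cosTaylor, huygensNum, huygensDen, sum_range_succ, sum_range_zero]
    norm_num [Nat.factorial]
    ring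
  linarith [mul_pos (pow_pos ht 7) hK]

lemma sin_mul_huygensNum_cos_lt {t : ℝ} (ht₀ : 0 < t) (ht : t < π / 2) :
    sin t * huygensNum (cos t) < t * huygensDen (cos t) := by
  have ht2 : t ^ 2 ≤ 5 / 2 := by nlinarith [pi_lt_d2]
  have hsin : 0 < sin t := sin_pos_of_pos_of_lt_pi ht₀ (by linarith [pi_pos])
  have hcos : 0 < cos t := cos_pos_of_mem_Ioo ⟨by linarith, ht⟩
  have hsin_le : sin t ≤ sinTaylor 3 t := by
    have := neg_one_pow_mul_sin_sub_sinTaylor_nonneg 2 ht₀.le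
    norm_num at this
    linarith
  have hcos_le : cos t ≤ cosTaylor 3 t := by
    have := neg_one_pow_mul_cos_sub_cosTaylor_nonneg 2 ht₀.le
    norm_num at this
    linarith
  have hcos_ge : cosTaylor 4 t ≤ cos t := by
    have := neg_one_pow_mul_cos_sub_cosTaylor_nonneg 3 ht₀.le
    norm_num at this
    linarith
  have hcosTaylor3 : cosTaylor 3 t ≤ 1 := by
    simp only [cosTaylor, sum_range_succ, sum_range_zero]
    norm_num [Nat.factorial]
    nlinarith
  have hcosTaylor4 : -1 / 2 ≤ cosTaylor 4 t := by
    simp only [cosTaylor, sum_range_succ, sum_range_zero]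
    norm_num [Nat.factorial]
    nlinarith [pow_nonneg (sq_nonneg t) 2,
      mul_le_mul_of_nonneg_left ht2 (pow_nonneg (sq_nonneg t) 2)]
  have hcos_mem : cos t ∈ Set.Icc (-1) 1 := ⟨by linarith, cos_le_one t⟩
  calc sin t * huygensNum (cos t)
      ≤ sinTaylor 3 t * huygensNum (cos t) :=
        mul_le_mul_of_nonneg_right hsin_le
          ((by norm_num [huygensNum] : (0 : ℝ) ≤ huygensNum 0).trans
            (huygensNum_monotoneOn ⟨by norm_num, zero_le_one⟩ hcos_mem hcos.le))
    _ ≤ sinTaylor 3 t * huygensNum (cosTaylor 3 t) :=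
        mul_le_mul_of_nonneg_left
          (huygensNum_monotoneOn hcos_mem ⟨by linarith, hcosTaylor3⟩ hcos_le)
          (hsin.le.trans hsin_le)
    _ < t * huygensDen (cosTaylor 4 t) := sinTaylor_mul_huygensNum_lt ht₀ ht2
    _ ≤ t * huygensDen (cos t) :=
        mul_le_mul_of_nonneg_left
          (huygensDen_monotoneOn hcosTaylor4 (by simp only [Set.mem_Ici]; linarith) hcos_ge)
          ht₀.le

lemma huygens_lt_of_mul_huygensNum_lt {s c t : ℝ} (hs : 0 < s) (hc : 0 < 2 + 3 * c)
    (h : s * huygensNum c < t * huygensDen c) :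
    2 * s * c + 10 * (4 * s ^ 2 - (2 * s * c) ^ 2) /
        (12 * s + 9 * (2 * s * c) + 8 * (2 * s - 2 * s * c) ^ 2 / (12 * s + 9 * (2 * s * c)))
      < 2 * t := by
  have hP := huygensDen_pos c
  have hinner : 12 * s + 9 * (2 * s * c) + 8 * (2 * s - 2 * s * c) ^ 2 / (12 * s + 9 * (2 * s * c))
      = 2 * s * huygensDen c / (3 * (2 + 3 * c)) := by
    rw [show 12 * s + 9 * (2 * s * c) = 6 * s * (2 + 3 * c) by ring]
    unfold huygensDen
    field_simp
    ring
  rw [hinner, div_div_eq_mul_div, add_div' _ _ _ (by positivity), div_lt_iff₀ (by positivity)]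
  have := mul_lt_mul_of_pos_left h (by positivity : 0 < 4 * s)
  simp only [huygensNum, huygensDen] at this ⊢
  linarith

theorem huygens_lower_barycentric (x : ℝ) (h0 : 0 < x) (h1 : x < Real.pi) :
    x > Real.sin x +
      10 * (4 * Real.sin (x / 2) ^ 2 - Real.sin x ^ 2) /
        (12 * Real.sin (x / 2) + 9 * Real.sin x +
          8 * (2 * Real.sin (x / 2) - Real.sin x) ^ 2 /
            (12 * Real.sin (x / 2) + 9 * Real.sin x)) := by
  obtain ⟨t, rfl⟩ : ∃ t, x = 2 * t := ⟨x / 2, by ring⟩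
  have ht₀ : 0 < t := by linarith
  have ht : t < π / 2 := by linarith
  rw [mul_div_cancel_left₀ t two_ne_zero, sin_two_mul]
  exact huygens_lt_of_mul_huygensNum_lt (sin_pos_of_pos_of_lt_pi ht₀ (by linarith))
    (by linarith [cos_pos_of_mem_Ioo ⟨by linarith, ht⟩]) (sin_mul_huygensNum_cos_lt ht₀ ht)
end

section
/- For all x with 0 < x ≤ π/2, we have (4·sin(x/2)·2 − sin(x))/3 < x, i.e. x exceeds the chord of the arc plus one third of the difference between the chord and the sine: x > 2·sin(x/2) + (1/3)·(2·sin(x/2) − sin(x)). -/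
/-!
The defect `3x - 8 sin(x/2) + sin x` vanishes at `0` and has derivative
`3 - 4 cos(x/2) + cos x = 2 (1 - cos(x/2))²`, which is nonnegative and vanishes only where
`cos(x/2) = 1`; so the defect is strictly increasing on `[0, ∞)` and positive for `x > 0`.
-/

open Real Set

noncomputable def huygensDefect (x : ℝ) : ℝ := 3 * x - 8 * sin (x / 2) + sin x

theorem hasDerivAt_huygensDefect (x : ℝ) :
    HasDerivAt huygensDefect (2 * (1 - cos (x / 2)) ^ 2) x := by
  have hhalf : HasDerivAt (fun y : ℝ => sin (y / 2)) (cos (x / 2) * (1 / 2)) x :=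
    ((hasDerivAt_id' x).div_const 2).sin
  have hcos : cos x = 2 * cos (x / 2) ^ 2 - 1 := by
    rw [← cos_two_mul, mul_div_cancel₀ x two_ne_zero]
  exact ((((hasDerivAt_id' x).const_mul 3).sub (hhalf.const_mul 8)).add
    (hasDerivAt_sin x)).congr_deriv (by rw [hcos]; ring)

theorem monotone_huygensDefect : Monotone huygensDefect :=
  monotone_of_hasDerivAt_nonneg hasDerivAt_huygensDefect fun x => by positivity

theorem strictMonoOn_huygensDefect : StrictMonoOn huygensDefect (Icc 0 (2 * π)) := by
  refine strictMonoOn_of_hasDerivWithinAt_pos (convex_Icc _ _)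
    (fun x _ => (hasDerivAt_huygensDefect x).continuousAt.continuousWithinAt)
    (fun x _ => (hasDerivAt_huygensDefect x).hasDerivWithinAt) fun x hx => ?_
  rw [interior_Icc] at hx
  have hcos_ne : cos (x / 2) ≠ 1 := by
    rw [Ne, cos_eq_one_iff_of_lt_of_lt] <;> linarith [hx.1, hx.2, pi_pos]
  have hcos_lt : cos (x / 2) < 1 := lt_of_le_of_ne (cos_le_one _) hcos_ne
  have : 0 < 1 - cos (x / 2) := by linarith
  positivity

theorem huygensDefect_pos {x : ℝ} (hx : 0 < x) : 0 < huygensDefect x := by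
  have h2pi : 0 < 2 * π := by positivity
  calc 0 = huygensDefect 0 := by simp [huygensDefect]
    _ < huygensDefect (min x (2 * π)) :=
      strictMonoOn_huygensDefect (left_mem_Icc.2 h2pi.le)
        ⟨(lt_min hx h2pi).le, min_le_right _ _⟩ (lt_min hx h2pi)
    _ ≤ huygensDefect x := monotone_huygensDefect (min_le_left _ _)

theorem huygens_first_arc_inequality_general (x : ℝ) (h0 : 0 < x) :
    x > 2 * Real.sin (x / 2) + (1 / 3) * (2 * Real.sin (x / 2) - Real.sin x) := by
  have := huygensDefect_pos h0
  rw [huygensDefect] at this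
  linarith

theorem huygens_first_arc_inequality (x : ℝ) (h0 : 0 < x) (h1 : x ≤ Real.pi / 2) :
    x > 2 * Real.sin (x / 2) + (1 / 3) * (2 * Real.sin (x / 2) - Real.sin x) :=
  huygens_first_arc_inequality_general x h0
end

section
/- For every natural number n ≥ 3, letting C_n := 2·n·sin(π/n) be the perimeter of a regular n-gon inscribed in a unit circle, we have 2·π > C_{2n} + (1/3)·(C_{2n} − C_n). -/
/-! With `x = π / (2n)` we have `C_{2n} = 4n sin x`, `C_n = 2n sin 2x` and `2π = 4n x`, so the claim
is `8 sin x - sin 2x < 6x`. The difference `6x - 8 sin x + sin 2x` vanishes at `0` and has derivative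
`6 - 8 cos x + 2 cos 2x = 4 (1 - cos x)²`, which is positive on `(0, π)`. -/

open Real Set

lemma eight_mul_sin_sub_sin_two_mul_lt {x : ℝ} (hx₀ : 0 < x) (hxπ : x ≤ π) :
    8 * sin x - sin (2 * x) < 6 * x := by
  set f : ℝ → ℝ := fun y => 6 * y - 8 * sin y + sin (2 * y)
  have hf' (y : ℝ) : HasDerivAt f (4 * (1 - cos y) ^ 2) y := by
    have h := (((hasDerivAt_id y).const_mul 6).sub ((hasDerivAt_sin y).const_mul 8)).add
      ((hasDerivAt_sin (2 * y)).comp y ((hasDerivAt_id y).const_mul 2))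
    exact h.congr_deriv (by rw [cos_two_mul]; ring)
  have hmono : StrictMonoOn f (Icc 0 π) := by
    refine strictMonoOn_of_deriv_pos (convex_Icc 0 π)
      (fun y _ => (hf' y).continuousAt.continuousWithinAt) fun y hy => ?_
    rw [interior_Icc] at hy
    have hcos : cos y < 1 := by
      simpa using strictAntiOn_cos (left_mem_Icc.2 pi_pos.le) (Ioo_subset_Icc_self hy) hy.1
    rw [(hf' y).deriv]
    nlinarith
  have hf0x := hmono (left_mem_Icc.2 pi_pos.le) ⟨hx₀.le, hxπ⟩ hx₀
  simp only [f, mul_zero, sin_zero, sub_zero, add_zero] at hf0x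
  linarith

theorem snell_perimeter_extrapolation (n : ℕ) (hn : 3 ≤ n) :
    2 * Real.pi >
      (2 * (2 * n) * Real.sin (Real.pi / (2 * n))) +
        (1 / 3) * ((2 * (2 * n) * Real.sin (Real.pi / (2 * n))) -
          (2 * n * Real.sin (Real.pi / n))) := by
  have hn₃ : (3 : ℝ) ≤ n := by exact_mod_cast hn
  have hn₀ : (0 : ℝ) < n := by linarith
  have hx₀ : 0 < π / (2 * n) := by positivity
  have hxπ : π / (2 * n) ≤ π := div_le_self pi_pos.le (by linarith)
  have hπ : 2 * π = 4 * n * (π / (2 * n)) := by field_simp; ring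
  have hdouble : π / n = 2 * (π / (2 * n)) := by field_simp
  rw [hdouble, hπ]
  linarith [mul_lt_mul_of_pos_left (eight_mul_sin_sub_sin_two_mul_lt hx₀ hxπ) hn₀]
end

section
/- For every natural number n ≥ 3, letting C_n := 2·n·sin(π/n) and C'_n := 2·n·tan(π/n) be the perimeters of the inscribed and circumscribed regular n-gons of a unit circle, we have 2·π < (2/3)·C_n + (1/3)·C'_n. -/
open Real Set

lemma snell_key (x : ℝ) (hx : 0 < x) (hx2 : x < Real.pi / 2) :
    3 * x < 2 * Real.sin x + Real.tan x := by
  set f : ℝ → ℝ := fun y => 2 * Real.sin y + Real.tan y - 3 * y with hf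
  have hcos : ∀ y ∈ Set.Icc 0 x, Real.cos y ≠ 0 := by
    intro y hy
    have : 0 < Real.cos y :=
      Real.cos_pos_of_mem_Ioo ⟨by linarith [hy.1, Real.pi_pos], lt_of_le_of_lt hy.2 hx2⟩
    linarith
  have hcont : ContinuousOn f (Set.Icc 0 x) := by
    apply ContinuousOn.sub
    · apply ContinuousOn.add
      · exact (continuous_const.mul Real.continuous_sin).continuousOn
      · exact Real.continuousOn_tan.mono fun y hy => hcos y hy
    · exact (continuous_const.mul continuous_id).continuousOn
  have hmono : StrictMonoOn f (Set.Icc 0 x) := by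
    apply strictMonoOn_of_deriv_pos (convex_Icc 0 x) hcont
    intro y hy
    rw [interior_Icc] at hy
    have hy1 : 0 < y := hy.1
    have hy2 : y < Real.pi / 2 := lt_trans hy.2 hx2
    have hcy : 0 < Real.cos y :=
      Real.cos_pos_of_mem_Ioo ⟨by linarith [Real.pi_pos], hy2⟩
    have hcy1 : Real.cos y < 1 := by
      have := Real.cos_lt_cos_of_nonneg_of_le_pi le_rfl (by linarith [Real.pi_gt_three]) hy1
      simpa using this
    have hd : HasDerivAt f (2 * Real.cos y + 1 / Real.cos y ^ 2 - 3) y := by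
      have h1 : HasDerivAt Real.sin (Real.cos y) y := Real.hasDerivAt_sin y
      have h2 : HasDerivAt Real.tan (1 / Real.cos y ^ 2) y :=
        Real.hasDerivAt_tan (ne_of_gt hcy)
      have h3 : HasDerivAt (fun z : ℝ => 3 * z) 3 y := by
        simpa using (hasDerivAt_id y).const_mul (3 : ℝ)
      exact ((h1.const_mul 2).add h2).sub h3
    rw [hd.deriv]
    have hc2 : 0 < Real.cos y ^ 2 := by positivity
    rw [sub_pos]
    have h1 : 3 - 2 * Real.cos y < 1 / Real.cos y ^ 2 := by
      rw [lt_div_iff₀ hc2]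
      nlinarith [sq_nonneg (1 - Real.cos y)]
    linarith
  have h0 : f 0 = 0 := by simp [hf]
  have := hmono (Set.left_mem_Icc.2 (le_of_lt hx)) (Set.right_mem_Icc.2 (le_of_lt hx)) hx
  rw [h0] at this
  simp only [hf] at this
  linarith

theorem second_snell_theorem (n : ℕ) (hn : 3 ≤ n) :
    2 * Real.pi <
      (2 / 3) * (2 * n * Real.sin (Real.pi / n)) +
        (1 / 3) * (2 * n * Real.tan (Real.pi / n)) := by
  have hn0 : (0 : ℝ) < n := by positivity
  have hn3 : (3 : ℝ) ≤ n := by exact_mod_cast hn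
  have hx : 0 < Real.pi / n := div_pos Real.pi_pos hn0
  have hx2 : Real.pi / n < Real.pi / 2 := by
    apply div_lt_div_of_pos_left Real.pi_pos (by norm_num) (by linarith)
  have key := snell_key _ hx hx2
  have hnx : (n : ℝ) * (Real.pi / n) = Real.pi := by
    field_simp
  nlinarith [key, hn0]
end

section
/- For every natural number n ≥ 3, letting A_n := (n/2)·sin(2π/n) and A'_n := n·tan(π/n) be the areas of the inscribed and circumscribed regular n-gons of a unit circle, we have π < (2/3)·A'_n + (1/3)·A_n. -/
/-! With `x = π / n`, the claim reads `3x < 2 tan x + sin x cos x` on `(0, π/2)`. The difference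
of the two sides vanishes at `0` and has derivative `2 / cos² x + cos 2x - 3 = 2 sin⁴ x / cos² x > 0`. -/

open Real Set

lemma hasDerivAt_two_mul_tan_add_sin_mul_cos_sub {y : ℝ} (hy : cos y ≠ 0) :
    HasDerivAt (fun t => 2 * tan t + sin t * cos t - 3 * t) (2 * sin y ^ 4 / cos y ^ 2) y := by
  refine HasDerivAt.congr_deriv (((hasDerivAt_tan hy).const_mul 2).add
    ((hasDerivAt_sin y).mul (hasDerivAt_cos y)) |>.sub ((hasDerivAt_id y).const_mul 3)) ?_
  have hs : sin y ^ 2 = 1 - cos y ^ 2 := sin_sq y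
  field_simp
  rw [show sin y ^ 4 = (sin y ^ 2) ^ 2 by ring, hs]
  ring

lemma strictMonoOn_two_mul_tan_add_sin_mul_cos_sub :
    StrictMonoOn (fun t => 2 * tan t + sin t * cos t - 3 * t) (Ico 0 (π / 2)) := by
  have hcos : ∀ y ∈ Ico 0 (π / 2), 0 < cos y := fun y hy =>
    cos_pos_of_mem_Ioo ⟨by linarith [hy.1, pi_pos], hy.2⟩
  refine strictMonoOn_of_deriv_pos (convex_Ico 0 (π / 2)) ?_ fun y hy => ?_
  · exact fun y hy => (hasDerivAt_two_mul_tan_add_sin_mul_cos_sub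
      (hcos y hy).ne').continuousAt.continuousWithinAt
  · rw [interior_Ico] at hy
    rw [(hasDerivAt_two_mul_tan_add_sin_mul_cos_sub (hcos y (Ioo_subset_Ico_self hy)).ne').deriv]
    have hsin := sin_pos_of_pos_of_lt_pi hy.1 (by linarith [hy.2, pi_pos])
    have hcos_y := hcos y (Ioo_subset_Ico_self hy)
    positivity

lemma three_mul_lt_two_mul_tan_add_sin_mul_cos {x : ℝ} (hx₀ : 0 < x) (hx : x < π / 2) :
    3 * x < 2 * tan x + sin x * cos x := by
  have hmono := strictMonoOn_two_mul_tan_add_sin_mul_cos_sub (left_mem_Ico.2 (by positivity))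
    ⟨hx₀.le, hx⟩ hx₀
  simp only [tan_zero, sin_zero, cos_zero] at hmono
  linarith

theorem huygens_area_estimate (n : ℕ) (hn : 3 ≤ n) :
    Real.pi <
      (2 / 3) * (n * Real.tan (Real.pi / n)) +
        (1 / 3) * ((n / 2 : ℝ) * Real.sin (2 * Real.pi / n)) := by
  have hn₀ : (0 : ℝ) < n := by positivity
  have hn₃ : (3 : ℝ) ≤ n := by exact_mod_cast hn
  have hx : π / n < π / 2 := div_lt_div_of_pos_left pi_pos two_pos (by linarith)
  have key := three_mul_lt_two_mul_tan_add_sin_mul_cos (div_pos pi_pos hn₀) hx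
  have hπ : π = n * (π / n) := by field_simp
  rw [mul_div_assoc, sin_two_mul]
  nlinarith
end

section
/- For all x with 0 < x < π/2, the area of the circular segment cut off by the chord of the arc 2x in a unit circle exceeds 4/3 times the area of the maximum inscribed triangle; analytically: x − sin(x)·cos(x) > (4/3)·sin(x)·(1 − cos(x)). -/
/-!
The excess of the segment over `4 / 3` of the triangle vanishes at `0` and has derivative
`2 / 3 * (1 - cos x) ^ 2`, which is nonnegative and vanishes only at multiples of `2π`; so the
excess is strictly increasing on `[0, π]` and nondecreasing beyond, hence positive for `x > 0`.
-/

open Real Set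

noncomputable def segmentExcess (x : ℝ) : ℝ :=
  x - sin x * cos x - 4 / 3 * sin x * (1 - cos x)

theorem hasDerivAt_segmentExcess (x : ℝ) :
    HasDerivAt segmentExcess (2 / 3 * (1 - cos x) ^ 2) x := by
  have h := ((hasDerivAt_id x).sub ((hasDerivAt_sin x).mul (hasDerivAt_cos x))).sub
    (((hasDerivAt_sin x).const_mul (4 / 3 : ℝ)).mul
      ((hasDerivAt_const x 1).sub (hasDerivAt_cos x)))
  refine h.congr_deriv ?_
  simp only [Pi.sub_apply]
  linear_combination (-1 / 3 : ℝ) * sin_sq_add_cos_sq x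

theorem monotone_segmentExcess : Monotone segmentExcess :=
  monotone_of_deriv_nonneg (fun x => (hasDerivAt_segmentExcess x).differentiableAt)
    fun x => (hasDerivAt_segmentExcess x).deriv ▸ by positivity

theorem strictMonoOn_segmentExcess : StrictMonoOn segmentExcess (Icc 0 π) := by
  refine strictMonoOn_of_deriv_pos (convex_Icc 0 π)
    (fun x _ => (hasDerivAt_segmentExcess x).continuousAt.continuousWithinAt) fun x hx => ?_
  rw [interior_Icc] at hx
  have hcos : cos x < 1 := by
    simpa using cos_lt_cos_of_nonneg_of_le_pi le_rfl hx.2.le hx.1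
  have : 0 < 1 - cos x := sub_pos.2 hcos
  rw [(hasDerivAt_segmentExcess x).deriv]
  positivity

theorem segmentExcess_pos {x : ℝ} (hx : 0 < x) : 0 < segmentExcess x := by
  have hzero : segmentExcess 0 = 0 := by simp [segmentExcess]
  have hmono := strictMonoOn_segmentExcess (left_mem_Icc.2 pi_pos.le)
  rcases le_or_gt x π with hxπ | hπx
  · exact hzero ▸ hmono ⟨hx.le, hxπ⟩ hx
  · exact hzero ▸ (hmono (right_mem_Icc.2 pi_pos.le) pi_pos).trans_le
      (monotone_segmentExcess hπx.le)

theorem heron_huygens_first_lemma_general (x : ℝ) (h0 : 0 < x) :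
    x - Real.sin x * Real.cos x > (4 / 3) * Real.sin x * (1 - Real.cos x) := by
  have := segmentExcess_pos h0
  unfold segmentExcess at this
  linarith

theorem heron_huygens_first_lemma (x : ℝ) (h0 : 0 < x) (h1 : x < Real.pi / 2) :
    x - Real.sin x * Real.cos x > (4 / 3) * Real.sin x * (1 - Real.cos x) :=
  heron_huygens_first_lemma_general x h0
end

section
/- For all x with 0 < x < π/2, the area of the circular segment subtended by central angle 2x in a unit circle is less than 2/3 of the area of the triangle with the same base whose other two sides are tangent to the arc; analytically: x − sin(x)·cos(x) < (2/3)·sin(x)·(1/cos(x) − cos(x)) = (2/3)·sin(x)³/cos(x). -/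
open Real

theorem heron_huygens_second_lemma (x : ℝ) (h0 : 0 < x) (h1 : x < Real.pi / 2) :
    x - Real.sin x * Real.cos x < (2 / 3) * Real.sin x ^ 3 / Real.cos x := by
  set f : ℝ → ℝ := fun y => 2 / 3 * Real.sin y ^ 3 / Real.cos y - y + Real.sin y * Real.cos y
    with hf
  have hcos : ∀ y ∈ Set.Ico (0 : ℝ) (Real.pi / 2), 0 < Real.cos y := by
    intro y hy
    exact Real.cos_pos_of_mem_Ioo ⟨by linarith [hy.1, Real.pi_pos], hy.2⟩
  have key : StrictMonoOn f (Set.Ico 0 (Real.pi / 2)) := by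
    apply strictMonoOn_of_deriv_pos (convex_Ico _ _)
    · apply ContinuousOn.add
      apply ContinuousOn.sub
      · exact ContinuousOn.div (by fun_prop) (by fun_prop)
          (fun y hy => (hcos y hy).ne')
      · exact continuousOn_id
      · fun_prop
    · intro y hy
      rw [interior_Ico] at hy
      have hc : 0 < Real.cos y := hcos y ⟨hy.1.le, hy.2⟩
      have hs : 0 < Real.sin y :=
        Real.sin_pos_of_pos_of_lt_pi hy.1 (by linarith [Real.pi_pos, hy.2])
      have hd : HasDerivAt f
          ((2 / 3 * (3 * Real.sin y ^ 2 * Real.cos y) * Real.cos y -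
            2 / 3 * Real.sin y ^ 3 * (-Real.sin y)) / Real.cos y ^ 2 - 1 +
            (Real.cos y * Real.cos y + Real.sin y * (-Real.sin y))) y := by
        have h1 : HasDerivAt (fun z => 2 / 3 * Real.sin z ^ 3)
            (2 / 3 * (3 * Real.sin y ^ 2 * Real.cos y)) y := by
          have := ((Real.hasDerivAt_sin y).pow 3).const_mul (2 / 3 : ℝ)
          simpa [mul_comm, mul_assoc, mul_left_comm] using this
        exact ((h1.div (Real.hasDerivAt_cos y) hc.ne').sub (hasDerivAt_id y)).add
          ((Real.hasDerivAt_sin y).mul (Real.hasDerivAt_cos y))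
      rw [hd.deriv]
      have hp := Real.sin_sq_add_cos_sq y
      have heq : (2 / 3 * (3 * Real.sin y ^ 2 * Real.cos y) * Real.cos y -
            2 / 3 * Real.sin y ^ 3 * (-Real.sin y)) / Real.cos y ^ 2 - 1 +
            (Real.cos y * Real.cos y + Real.sin y * (-Real.sin y)) =
          2 / 3 * Real.sin y ^ 4 / Real.cos y ^ 2 := by
        field_simp
        nlinarith [hp]
      rw [heq]
      positivity
  have h00 : (0 : ℝ) ∈ Set.Ico (0 : ℝ) (Real.pi / 2) := ⟨le_refl _, by linarith [Real.pi_pos]⟩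
  have hx : x ∈ Set.Ico (0 : ℝ) (Real.pi / 2) := ⟨h0.le, h1⟩
  have := key h00 hx h0
  simp only [hf, Real.sin_zero, Real.cos_zero] at this
  norm_num at this
  linarith
end

section
/- For all x with 0 < x < π/2: 2·sin(x/2) + (1/3)·(2·sin(x/2) − sin(x)) < x < 2·sin(x/2) + (1/3)·(2·sin(x/2) − sin(x))·(8·sin(x/2) + sin(x))/(4·sin(x/2) + 3·sin(x)). -/
/-!
Put `t = x / 2`, `s = sin t`, `c = cos t`, so that the chord is `2 s` and the sine is `2 s c`.
The lower bound becomes `s (4 - c) < 3 t` and the upper bound `3 t (2 + 3 c) < s (10 + 6 c - c²)`.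
Both sides vanish at `t = 0`, and the difference of the first has derivative `2 (1 - cos t)²`,
while the difference of the second has derivative `3 sin t` times the difference of the first,
so the upper bound follows from the lower one by a second monotonicity argument.
-/

open Real Set

lemma lt_of_hasDerivAt_pos {f f' : ℝ → ℝ} {a b : ℝ} (hab : a < b)
    (hf : ∀ x, HasDerivAt f (f' x) x) (hf' : ∀ x ∈ Ioo a b, 0 < f' x) : f a < f b :=
  strictMonoOn_of_hasDerivWithinAt_pos (convex_Icc a b)
    (fun x _ => (hf x).continuousAt.continuousWithinAt) (fun x _ => (hf x).hasDerivWithinAt)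
    (by rwa [interior_Icc]) (left_mem_Icc.2 hab.le) (right_mem_Icc.2 hab.le) hab

namespace Real

lemma sin_mul_four_sub_cos_lt {t : ℝ} (ht : 0 < t) (htπ : t ≤ π) :
    sin t * (4 - cos t) < 3 * t := by
  have hderiv (u : ℝ) : HasDerivAt (fun u => 3 * u - sin u * (4 - cos u))
      (2 * (1 - cos u) ^ 2) u := by
    refine (((hasDerivAt_id u).const_mul 3).sub
      ((hasDerivAt_sin u).mul ((hasDerivAt_cos u).const_sub 4))).congr_deriv ?_
    linear_combination (-1 : ℝ) * sin_sq_add_cos_sq u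
  have hpos : ∀ u ∈ Ioo 0 t, 0 < 2 * (1 - cos u) ^ 2 := fun u hu => by
    have : cos u < 1 := by
      simpa using cos_lt_cos_of_nonneg_of_le_pi le_rfl (hu.2.le.trans htπ) hu.1
    positivity
  simpa using lt_of_hasDerivAt_pos ht hderiv hpos

lemma mul_two_add_three_cos_lt {t : ℝ} (ht : 0 < t) (htπ : t ≤ π) :
    3 * t * (2 + 3 * cos t) < sin t * (10 + 6 * cos t - cos t ^ 2) := by
  have hderiv (u : ℝ) : HasDerivAt
      (fun u => sin u * (10 + 6 * cos u - cos u ^ 2) - 3 * u * (2 + 3 * cos u))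
      (3 * sin u * (3 * u - sin u * (4 - cos u))) u := by
    refine (((hasDerivAt_sin u).mul ((((hasDerivAt_cos u).const_mul 6).const_add 10).sub
      ((hasDerivAt_cos u).pow 2))).sub
      (((hasDerivAt_id u).const_mul 3).mul
        (((hasDerivAt_cos u).const_mul 3).const_add 2))).congr_deriv ?_
    simp only [id, Pi.sub_apply, Pi.pow_apply, Nat.cast_ofNat]
    linear_combination (6 - cos u) * sin_sq_add_cos_sq u
  have hpos : ∀ u ∈ Ioo 0 t, 0 < 3 * sin u * (3 * u - sin u * (4 - cos u)) := fun u hu => by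
    have := sin_pos_of_pos_of_lt_pi hu.1 (hu.2.trans_le htπ)
    have := sin_mul_four_sub_cos_lt hu.1 (hu.2.le.trans htπ)
    have : 0 < 3 * u - sin u * (4 - cos u) := by linarith
    positivity
  simpa [sub_pos] using lt_of_hasDerivAt_pos ht hderiv hpos

end Real

theorem huygens_two_sided_bounds (x : ℝ) (h0 : 0 < x) (h1 : x < Real.pi / 2) :
    2 * Real.sin (x / 2) + (1 / 3) * (2 * Real.sin (x / 2) - Real.sin x) < x ∧
    x < 2 * Real.sin (x / 2) + (1 / 3) * (2 * Real.sin (x / 2) - Real.sin x) *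
      ((8 * Real.sin (x / 2) + Real.sin x) / (4 * Real.sin (x / 2) + 3 * Real.sin x)) := by
  have ht : 0 < x / 2 := by linarith
  have htπ : x / 2 ≤ π := by linarith [pi_pos]
  have hsin : sin x = 2 * sin (x / 2) * cos (x / 2) := by
    rw [← sin_two_mul, mul_div_cancel₀ x two_ne_zero]
  have hc : 0 < cos (x / 2) := cos_pos_of_mem_Ioo ⟨by linarith [pi_pos], by linarith⟩
  have hupper : 2 * sin (x / 2) + 1 / 3 * (2 * sin (x / 2) - sin x) *
      ((8 * sin (x / 2) + sin x) / (4 * sin (x / 2) + 3 * sin x)) =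
      2 * sin (x / 2) * (10 + 6 * cos (x / 2) - cos (x / 2) ^ 2) / (3 * (2 + 3 * cos (x / 2))) := by
    rw [hsin]
    field_simp
    ring
  rw [hupper, lt_div_iff₀ (by positivity), hsin]
  constructor
  · linear_combination (2 / 3 : ℝ) * sin_mul_four_sub_cos_lt ht htπ
  · linear_combination (2 : ℝ) * mul_two_add_three_cos_lt ht htπ
end

section
/- Define f(x) := π/4 − (1/2)·arcsin(1 − x) − (1/2)·(1 − x)·√(2x − x²) − (2x/(3·√5))·√(10x − 3x²). Then f(x) < 0 for all x with 0 < x ≤ 1. -/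
/-!
The function vanishes at `0`, and on `(0, 2)` its derivative is
`√(2t - t²) - 2t(5 - 2t) / (√5 √(10t - 3t²))`, which is negative: the derivative of the
circular part collapses to the half chord `√(2t - t²)`. Hence the function is strictly
decreasing on `[0, 2]`.
-/

open Real

noncomputable section

/-- Half the area of the segment of height `t` cut from the unit disc, written with
`arccos (1 - t) = π / 2 - arcsin (1 - t)`. -/
def halfSegmentArea (t : ℝ) : ℝ :=
  π / 4 - (1 / 2) * arcsin (1 - t) - (1 / 2) * (1 - t) * √(2 * t - t ^ 2)

def parabolicArea (t : ℝ) : ℝ :=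
  (2 * t / (3 * √5)) * √(10 * t - 3 * t ^ 2)

def areaComparison (t : ℝ) : ℝ :=
  halfSegmentArea t - parabolicArea t

lemma areaComparison_zero : areaComparison 0 = 0 := by
  norm_num [areaComparison, halfSegmentArea, parabolicArea]
  ring

lemma continuous_areaComparison : Continuous areaComparison := by
  unfold areaComparison halfSegmentArea parabolicArea
  fun_prop

lemma hasDerivAt_halfSegmentArea {t : ℝ} (ht0 : 0 < t) (ht2 : t < 2) :
    HasDerivAt halfSegmentArea (√(2 * t - t ^ 2)) t := by
  have hpos : 0 < 2 * t - t ^ 2 := by nlinarith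
  have harcsin : HasDerivAt (fun s => arcsin (1 - s)) (1 / √(1 - (1 - t) ^ 2) * -1) t :=
    (hasDerivAt_arcsin (by linarith) (by linarith)).comp t ((hasDerivAt_id t).const_sub 1)
  have hsqrt : HasDerivAt (fun s => √(2 * s - s ^ 2)) ((2 - 2 * t) / (2 * √(2 * t - t ^ 2))) t := by
    simpa using ((((hasDerivAt_id t).const_mul 2).sub (hasDerivAt_pow 2 t)).sqrt hpos.ne')
  refine HasDerivAt.congr_deriv (((harcsin.const_mul (1 / 2)).const_sub (π / 4)).sub
    ((((hasDerivAt_id t).const_sub 1).const_mul (1 / 2)).mul hsqrt)) ?_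
  have hsq : √(2 * t - t ^ 2) ^ 2 = 2 * t - t ^ 2 := sq_sqrt hpos.le
  have hne : √(2 * t - t ^ 2) ≠ 0 := (sqrt_pos.2 hpos).ne'
  rw [show 1 - (1 - t) ^ 2 = 2 * t - t ^ 2 by ring, id]
  generalize √(2 * t - t ^ 2) = a at hsq hne ⊢
  field_simp
  linear_combination -hsq

lemma hasDerivAt_parabolicArea {t : ℝ} (ht0 : 0 < t) (ht : t < 10 / 3) :
    HasDerivAt parabolicArea (2 * t * (5 - 2 * t) / (√5 * √(10 * t - 3 * t ^ 2))) t := by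
  have hpos : 0 < 10 * t - 3 * t ^ 2 := by nlinarith
  have hsqrt : HasDerivAt (fun s => √(10 * s - 3 * s ^ 2))
      ((10 - 3 * (2 * t)) / (2 * √(10 * t - 3 * t ^ 2))) t := by
    simpa using ((((hasDerivAt_id t).const_mul 10).sub
      ((hasDerivAt_pow 2 t).const_mul 3)).sqrt hpos.ne')
  refine HasDerivAt.congr_deriv
    ((((hasDerivAt_id t).const_mul 2).div_const (3 * √5)).mul hsqrt) ?_
  have hsq : √(10 * t - 3 * t ^ 2) ^ 2 = 10 * t - 3 * t ^ 2 := sq_sqrt hpos.le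
  have hne : √(10 * t - 3 * t ^ 2) ≠ 0 := (sqrt_pos.2 hpos).ne'
  have h5 : √5 ≠ 0 := by positivity
  rw [id]
  generalize √(10 * t - 3 * t ^ 2) = b at hsq hne ⊢
  field_simp
  linear_combination 2 * hsq

/-- After squaring this is `5 (2 - t) (10 - 3 t) < 4 (5 - 2 t) ^ 2`, i.e. `0 < t ^ 2`. -/
lemma sqrt_five_mul_sqrt_mul_sqrt_lt {t : ℝ} (ht0 : 0 < t) (ht2 : t < 2) :
    √5 * √(10 * t - 3 * t ^ 2) * √(2 * t - t ^ 2) < 2 * t * (5 - 2 * t) := by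
  rw [← sqrt_mul (by norm_num), ← sqrt_mul (by nlinarith)]
  apply sqrt_lt' (by nlinarith) |>.2
  nlinarith [pow_pos ht0 4]

lemma deriv_areaComparison_neg {t : ℝ} (ht0 : 0 < t) (ht2 : t < 2) :
    deriv areaComparison t < 0 := by
  have hb : 0 < √5 * √(10 * t - 3 * t ^ 2) := by
    have : 0 < 10 * t - 3 * t ^ 2 := by nlinarith
    positivity
  have hderiv : HasDerivAt areaComparison _ t := (hasDerivAt_halfSegmentArea ht0 ht2).sub
    (hasDerivAt_parabolicArea ht0 (by linarith))
  rw [hderiv.deriv, sub_neg, lt_div_iff₀ hb]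
  linarith [sqrt_five_mul_sqrt_mul_sqrt_lt ht0 ht2]

lemma strictAntiOn_areaComparison : StrictAntiOn areaComparison (Set.Icc 0 2) := by
  refine strictAntiOn_of_deriv_neg (convex_Icc 0 2) continuous_areaComparison.continuousOn ?_
  rw [interior_Icc]
  exact fun t ht => deriv_areaComparison_neg ht.1 ht.2

end

theorem area_comparison_function_neg (x : ℝ) (h0 : 0 < x) (h1 : x ≤ 1) :
    Real.pi / 4 - (1 / 2) * Real.arcsin (1 - x)
      - (1 / 2) * (1 - x) * Real.sqrt (2 * x - x ^ 2)
      - (2 * x / (3 * Real.sqrt 5)) * Real.sqrt (10 * x - 3 * x ^ 2) < 0 := by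
  have := strictAntiOn_areaComparison ⟨le_rfl, zero_le_two⟩ ⟨h0.le, by linarith⟩ h0
  rw [areaComparison_zero] at this
  exact this
end

section
/- Define f(x) := π/4 − (1/2)·arcsin(1 − x) − (1/2)·(1 − x)·√(2x − x²) − (2x/(3·√5))·√(10x − 3x²). Then f is strictly decreasing on [0,1]; in particular its derivative satisfies f'(x) = √(2x − x²) − 2x(5 − 2x)/(√5·√(10x − 3x²)) < 0 for 0 < x < 1. -/
/-!
The first three terms of `f` are the area under the arc `y = √(2t - t²)` of the unit circle over
`[0, x]`, so they differentiate to `√(2x - x²)`; the last term differentiates to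
`2x(5 - 2x) / √(5(10x - 3x²))`. The sign of `f'` follows by squaring, since
`4x²(5 - 2x)² - 5(2x - x²)(10x - 3x²) = x²((10 - 4x)² - 5(2 - x)(10 - 3x)) = x⁴ > 0`.
-/

open Real Set

noncomputable def segmentArea (x : ℝ) : ℝ :=
  π / 4 - (1 / 2) * arcsin (1 - x) - (1 / 2) * (1 - x) * √(2 * x - x ^ 2)

noncomputable def comparisonArea (x : ℝ) : ℝ :=
  (2 * x / (3 * √5)) * √(10 * x - 3 * x ^ 2)

lemma continuous_segmentArea : Continuous segmentArea := by
  unfold segmentArea; fun_prop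

lemma continuous_comparisonArea : Continuous comparisonArea := by
  unfold comparisonArea; fun_prop

lemma hasDerivAt_segmentArea {x : ℝ} (hx₀ : 0 < x) (hx₂ : x < 2) :
    HasDerivAt segmentArea √(2 * x - x ^ 2) x := by
  have hq : 0 < 2 * x - x ^ 2 := by nlinarith
  have hs : 0 < √(2 * x - x ^ 2) := sqrt_pos.2 hq
  have hline : HasDerivAt (fun x : ℝ => 1 - x) (-1) x := by
    simpa using (hasDerivAt_id x).const_sub 1
  have harcsin : HasDerivAt (fun x => arcsin (1 - x)) (1 / √(1 - (1 - x) ^ 2) * (-1)) x :=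
    (hasDerivAt_arcsin (by linarith) (by linarith)).comp x hline
  have hsqrt : HasDerivAt (fun x => √(2 * x - x ^ 2))
      ((2 - 2 * x) / (2 * √(2 * x - x ^ 2))) x :=
    (((hasDerivAt_id x).const_mul 2).sub (hasDerivAt_pow 2 x)).sqrt hq.ne'
      |>.congr_deriv (by norm_num)
  have := (((hasDerivAt_const x (π / 4)).sub (harcsin.const_mul (1 / 2))).sub
    ((hline.const_mul (1 / 2)).mul hsqrt))
  refine this.congr_deriv ?_
  rw [show 1 - (1 - x) ^ 2 = 2 * x - x ^ 2 by ring]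
  have hs2 := sq_sqrt hq.le
  set s := √(2 * x - x ^ 2)
  field_simp
  linear_combination -hs2

lemma hasDerivAt_comparisonArea {x : ℝ} (hx₀ : 0 < x) (hx₂ : x < 2) :
    HasDerivAt comparisonArea (2 * x * (5 - 2 * x) / (√5 * √(10 * x - 3 * x ^ 2))) x := by
  have hq : 0 < 10 * x - 3 * x ^ 2 := by nlinarith
  have ht : 0 < √(10 * x - 3 * x ^ 2) := sqrt_pos.2 hq
  have hsqrt : HasDerivAt (fun x => √(10 * x - 3 * x ^ 2))
      ((10 - 6 * x) / (2 * √(10 * x - 3 * x ^ 2))) x :=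
    (((hasDerivAt_id x).const_mul 10).sub ((hasDerivAt_pow 2 x).const_mul 3)).sqrt hq.ne'
      |>.congr_deriv (by norm_num; ring)
  have := (((hasDerivAt_id' x).const_mul 2).div_const (3 * √5)).mul hsqrt
  refine this.congr_deriv ?_
  have ht2 := sq_sqrt hq.le
  set t := √(10 * x - 3 * x ^ 2)
  field_simp
  linear_combination 2 * ht2

lemma sqrt_two_mul_sub_sq_lt {x : ℝ} (hx₀ : 0 < x) (hx₂ : x < 2) :
    √(2 * x - x ^ 2) < 2 * x * (5 - 2 * x) / (√5 * √(10 * x - 3 * x ^ 2)) := by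
  have hq : 0 < 10 * x - 3 * x ^ 2 := by nlinarith
  have key : (2 * x * (5 - 2 * x)) ^ 2 = (2 * x - x ^ 2) * (5 * (10 * x - 3 * x ^ 2)) + x ^ 4 := by
    ring
  rw [lt_div_iff₀ (mul_pos (sqrt_pos.2 (by norm_num)) (sqrt_pos.2 hq)),
    ← sqrt_mul (by norm_num), ← sqrt_mul (by nlinarith), sqrt_lt' (by nlinarith)]
  linarith [pow_pos hx₀ 4]

lemma strictAntiOn_segmentArea_sub_comparisonArea :
    StrictAntiOn (fun x => segmentArea x - comparisonArea x) (Icc 0 2) := by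
  refine strictAntiOn_of_deriv_neg (convex_Icc 0 2)
    (continuous_segmentArea.sub continuous_comparisonArea).continuousOn fun x hx => ?_
  rw [interior_Icc] at hx
  rw [((hasDerivAt_segmentArea hx.1 hx.2).fun_sub (hasDerivAt_comparisonArea hx.1 hx.2)).deriv]
  exact sub_neg.2 (sqrt_two_mul_sub_sq_lt hx.1 hx.2)

theorem area_comparison_strict_anti :
    StrictAntiOn (fun x : ℝ =>
      Real.pi / 4 - (1 / 2) * Real.arcsin (1 - x)
        - (1 / 2) * (1 - x) * Real.sqrt (2 * x - x ^ 2)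
        - (2 * x / (3 * Real.sqrt 5)) * Real.sqrt (10 * x - 3 * x ^ 2))
      (Set.Icc 0 1) ∧
    ∀ x : ℝ, 0 < x → x < 1 →
      HasDerivAt (fun x : ℝ =>
        Real.pi / 4 - (1 / 2) * Real.arcsin (1 - x)
          - (1 / 2) * (1 - x) * Real.sqrt (2 * x - x ^ 2)
          - (2 * x / (3 * Real.sqrt 5)) * Real.sqrt (10 * x - 3 * x ^ 2))
        (Real.sqrt (2 * x - x ^ 2)
          - 2 * x * (5 - 2 * x) / (Real.sqrt 5 * Real.sqrt (10 * x - 3 * x ^ 2))) x ∧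
      Real.sqrt (2 * x - x ^ 2)
        - 2 * x * (5 - 2 * x) / (Real.sqrt 5 * Real.sqrt (10 * x - 3 * x ^ 2)) < 0 := by
  refine ⟨strictAntiOn_segmentArea_sub_comparisonArea.mono
    (Icc_subset_Icc_right one_le_two), fun x hx₀ hx₁ => ?_⟩
  have hx₂ : x < 2 := hx₁.trans one_lt_two
  exact ⟨(hasDerivAt_segmentArea hx₀ hx₂).sub (hasDerivAt_comparisonArea hx₀ hx₂),
    sub_neg.2 (sqrt_two_mul_sub_sq_lt hx₀ hx₂)⟩
end

section
/- For all x with 0 < x < π/2, we have 3·sin(x)/(2 + cos(x)) = x − x⁵/180 − x⁷/1512 − O(x⁹); in particular, x − 3·sin(x)/(2 + cos(x)) < x⁵/180 for 0 < x < π/2 is false in general, but the weaker bound 0 < x − 3·sin(x)/(2 + cos(x)) ≤ x⁵/100 holds for 0 < x ≤ 1. -/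
private lemma aux_nonneg (f f' : ℝ → ℝ) (hf : ∀ y, HasDerivAt f (f' y) y)
    (h0 : f 0 = 0) (hd : ∀ y, 0 ≤ y → 0 ≤ f' y) {x : ℝ} (hx : 0 ≤ x) : 0 ≤ f x := by
  have hm : MonotoneOn f (Set.Ici (0:ℝ)) := by
    apply monotoneOn_of_deriv_nonneg (convex_Ici 0)
    · exact fun y _ => (hf y).continuousAt.continuousWithinAt
    · exact fun y _ => ((hf y).differentiableAt).differentiableWithinAt
    · intro y hy
      rw [(hf y).deriv]
      exact hd y (le_of_lt (by simpa using hy))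
  have h := hm Set.self_mem_Ici (by exact hx) hx
  rw [h0] at h
  exact h

private lemma cos_lb1 {x : ℝ} (hx : 0 ≤ x) : 1 - x^2/2 ≤ Real.cos x := by
  have := aux_nonneg (fun y => Real.cos y - (1 - y^2/2)) (fun y => y - Real.sin y)
    (fun y => by
      have h : HasDerivAt (fun y => Real.cos y - (1 - y^2/2))
          (-Real.sin y - (0 - 2*y^(2-1)/2)) y :=
        (Real.hasDerivAt_cos y).sub ((hasDerivAt_const y 1).sub ((hasDerivAt_pow 2 y).div_const 2))
      convert h using 1; ring)
    (by norm_num)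
    (fun y hy => by have := Real.sin_le hy; linarith) hx
  simpa using this

private lemma sin_lb1 {x : ℝ} (hx : 0 ≤ x) : x - x^3/6 ≤ Real.sin x := by
  have := aux_nonneg (fun y => Real.sin y - (y - y^3/6)) (fun y => Real.cos y - (1 - y^2/2))
    (fun y => by
      have h : HasDerivAt (fun y => Real.sin y - (y - y^3/6))
          (Real.cos y - (1 - 3*y^(3-1)/6)) y :=
        (Real.hasDerivAt_sin y).sub ((hasDerivAt_id y).sub ((hasDerivAt_pow 3 y).div_const 6))
      convert h using 1; ring)
    (by norm_num)
    (fun y hy => by have := cos_lb1 hy; linarith) hx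
  simpa using this

private lemma cos_ub2 {x : ℝ} (hx : 0 ≤ x) : Real.cos x ≤ 1 - x^2/2 + x^4/24 := by
  have := aux_nonneg (fun y => (1 - y^2/2 + y^4/24) - Real.cos y)
    (fun y => Real.sin y - (y - y^3/6))
    (fun y => by
      have h : HasDerivAt (fun y => (1 - y^2/2 + y^4/24) - Real.cos y)
          ((0 - 2*y^(2-1)/2 + 4*y^(4-1)/24) - (-Real.sin y)) y :=
        (((hasDerivAt_const y 1).sub ((hasDerivAt_pow 2 y).div_const 2)).add
          ((hasDerivAt_pow 4 y).div_const 24)).sub (Real.hasDerivAt_cos y)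
      convert h using 1; ring)
    (by norm_num)
    (fun y hy => by have := sin_lb1 hy; linarith) hx
  simpa using this

private lemma sin_ub2 {x : ℝ} (hx : 0 ≤ x) : Real.sin x ≤ x - x^3/6 + x^5/120 := by
  have := aux_nonneg (fun y => (y - y^3/6 + y^5/120) - Real.sin y)
    (fun y => (1 - y^2/2 + y^4/24) - Real.cos y)
    (fun y => by
      have h : HasDerivAt (fun y => (y - y^3/6 + y^5/120) - Real.sin y)
          ((1 - 3*y^(3-1)/6 + 5*y^(5-1)/120) - Real.cos y) y :=
        (((hasDerivAt_id y).sub ((hasDerivAt_pow 3 y).div_const 6)).add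
          ((hasDerivAt_pow 5 y).div_const 120)).sub (Real.hasDerivAt_sin y)
      convert h using 1; ring)
    (by norm_num)
    (fun y hy => by have := cos_ub2 hy; linarith) hx
  simpa using this

private lemma cos_lb3 {x : ℝ} (hx : 0 ≤ x) : 1 - x^2/2 + x^4/24 - x^6/720 ≤ Real.cos x := by
  have := aux_nonneg (fun y => Real.cos y - (1 - y^2/2 + y^4/24 - y^6/720))
    (fun y => (y - y^3/6 + y^5/120) - Real.sin y)
    (fun y => by
      have h : HasDerivAt (fun y => Real.cos y - (1 - y^2/2 + y^4/24 - y^6/720))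
          (-Real.sin y - (0 - 2*y^(2-1)/2 + 4*y^(4-1)/24 - 6*y^(6-1)/720)) y :=
        (Real.hasDerivAt_cos y).sub
          ((((hasDerivAt_const y 1).sub ((hasDerivAt_pow 2 y).div_const 2)).add
            ((hasDerivAt_pow 4 y).div_const 24)).sub ((hasDerivAt_pow 6 y).div_const 720))
      convert h using 1; ring)
    (by norm_num)
    (fun y hy => by have := sin_ub2 hy; linarith) hx
  simpa using this

private lemma sin_lb3 {x : ℝ} (hx : 0 ≤ x) : x - x^3/6 + x^5/120 - x^7/5040 ≤ Real.sin x := by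
  have := aux_nonneg (fun y => Real.sin y - (y - y^3/6 + y^5/120 - y^7/5040))
    (fun y => Real.cos y - (1 - y^2/2 + y^4/24 - y^6/720))
    (fun y => by
      have h : HasDerivAt (fun y => Real.sin y - (y - y^3/6 + y^5/120 - y^7/5040))
          (Real.cos y - (1 - 3*y^(3-1)/6 + 5*y^(5-1)/120 - 7*y^(7-1)/5040)) y :=
        (Real.hasDerivAt_sin y).sub
          ((((hasDerivAt_id y).sub ((hasDerivAt_pow 3 y).div_const 6)).add
            ((hasDerivAt_pow 5 y).div_const 120)).sub ((hasDerivAt_pow 7 y).div_const 5040))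
      convert h using 1; ring)
    (by norm_num)
    (fun y hy => by have := cos_lb3 hy; linarith) hx
  simpa using this

theorem cusa_error_bound (x : ℝ) (h0 : 0 < x) (h1 : x ≤ 1) :
    0 < x - 3 * Real.sin x / (2 + Real.cos x) ∧
    x - 3 * Real.sin x / (2 + Real.cos x) ≤ x ^ 5 / 100 := by
  have hx : (0:ℝ) ≤ x := h0.le
  have hc1 := cos_lb1 hx
  have hc2 := cos_ub2 hx
  have hc3 := cos_lb3 hx
  have hs2 := sin_ub2 hx
  have hs3 := sin_lb3 hx
  have hd : (0:ℝ) < 2 + Real.cos x := by nlinarith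
  constructor
  · rw [sub_pos, div_lt_iff₀ hd]
    nlinarith [pow_pos h0 5, pow_pos h0 7, sq_nonneg x, mul_le_one₀ h1 hx h1]
  · have heq : x - 3 * Real.sin x / (2 + Real.cos x)
        = (x * (2 + Real.cos x) - 3 * Real.sin x) / (2 + Real.cos x) := by
      field_simp
    rw [heq, div_le_div_iff₀ hd (by norm_num : (0:ℝ) < 100)]
    have hx2 : x^2 ≤ 1 := by nlinarith
    have h75 : x^7 ≤ x^5 := by nlinarith [pow_pos h0 5]
    nlinarith [pow_pos h0 5, pow_pos h0 7]
end

section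
/- For all x with 0 < x < π/4, we have 0 < (2·sin(x) + tan(x))/3 − x < x⁵/10. -/
open Real

lemma snell_cos_pos {y : ℝ} (hy : y ∈ Set.Icc 0 (Real.pi / 4)) : 0 < Real.cos y := by
  apply Real.cos_pos_of_mem_Ioo
  constructor
  · linarith [hy.1, Real.pi_pos]
  · have := hy.2; linarith [Real.pi_pos]

lemma snell_hasDerivAt_f {y : ℝ} (hc : Real.cos y ≠ 0) :
    HasDerivAt (fun t => (2 * Real.sin t + Real.tan t) / 3 - t)
      ((2 * Real.cos y + 1 / Real.cos y ^ 2) / 3 - 1) y := by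
  have h := (((Real.hasDerivAt_sin y).const_mul 2).add (Real.hasDerivAt_tan hc)).div_const 3
  exact h.sub (hasDerivAt_id y)

lemma snell_hasDerivAt_g {y : ℝ} (hc : Real.cos y ≠ 0) :
    HasDerivAt (fun t => t ^ 5 / 10 - ((2 * Real.sin t + Real.tan t) / 3 - t))
      (5 * y ^ 4 / 10 - ((2 * Real.cos y + 1 / Real.cos y ^ 2) / 3 - 1)) y := by
  have h1 : HasDerivAt (fun t : ℝ => t ^ 5 / 10) (5 * y ^ 4 / 10) y := by
    have := (hasDerivAt_pow 5 y).div_const 10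
    simpa [mul_comm] using this
  exact h1.sub (snell_hasDerivAt_f hc)

theorem snell_error_bound (x : ℝ) (h0 : 0 < x) (h1 : x < Real.pi / 4) :
    0 < (2 * Real.sin x + Real.tan x) / 3 - x ∧
    (2 * Real.sin x + Real.tan x) / 3 - x < x ^ 5 / 10 := by
  have hxIcc : x ∈ Set.Icc (0:ℝ) (Real.pi / 4) := ⟨h0.le, h1.le⟩
  have h0Icc : (0:ℝ) ∈ Set.Icc (0:ℝ) (Real.pi / 4) := ⟨le_refl 0, by positivity⟩
  -- common facts for y ∈ Ioo 0 (π/4)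
  have key : ∀ y ∈ Set.Ioo (0:ℝ) (Real.pi/4),
      0 < Real.cos y ∧ Real.cos y < 1 ∧ 1 - Real.cos y < y^2/2 ∧ 1/2 < Real.cos y ^ 2 := by
    intro y hy
    have hy0 := hy.1
    have hy1 := hy.2
    have hpi : (0:ℝ) < Real.pi := Real.pi_pos
    have hc0 : 0 < Real.cos y := snell_cos_pos ⟨hy0.le, hy1.le⟩
    have hc1 : Real.cos y < 1 := by
      have := Real.strictAntiOn_cos (Set.mem_Icc.2 ⟨le_refl 0, by linarith⟩)
        (Set.mem_Icc.2 ⟨hy0.le, by linarith⟩) hy0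
      simpa using this
    have hcq : 1 - Real.cos y < y^2/2 := by
      have := Real.one_sub_sq_div_two_lt_cos (x := y) (ne_of_gt hy0)
      linarith
    have hsq : 1/2 < Real.cos y ^ 2 := by
      have hcc : Real.cos (Real.pi/4) < Real.cos y := by
        apply Real.strictAntiOn_cos (Set.mem_Icc.2 ⟨hy0.le, by linarith⟩)
          (Set.mem_Icc.2 ⟨by positivity, by linarith⟩) hy1
      rw [Real.cos_pi_div_four] at hcc
      nlinarith [Real.sq_sqrt (by norm_num : (2:ℝ) ≥ 0), Real.sqrt_nonneg 2]
    exact ⟨hc0, hc1, hcq, hsq⟩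
  constructor
  · -- lower bound via strict mono of f
    have hf : StrictMonoOn (fun t => (2 * Real.sin t + Real.tan t) / 3 - t)
        (Set.Icc 0 (Real.pi/4)) := by
      apply strictMonoOn_of_deriv_pos (convex_Icc _ _)
      · apply ContinuousOn.sub
        · apply ContinuousOn.div_const
          apply ContinuousOn.add (by fun_prop)
          exact fun y hy => (Real.continuousAt_tan.2 (ne_of_gt (snell_cos_pos hy))).continuousWithinAt
        · fun_prop
      · intro y hy
        rw [interior_Icc] at hy
        obtain ⟨hc0, hc1, _, _⟩ := key y hy
        rw [(snell_hasDerivAt_f (ne_of_gt hc0)).deriv]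
        have h2 : (0:ℝ) < Real.cos y ^ 2 := by positivity
        have hexp : (2 * Real.cos y + 1 / Real.cos y ^ 2) / 3 - 1
            = ((Real.cos y - 1)^2 * (2 * Real.cos y + 1)) / (3 * Real.cos y ^ 2) := by
          field_simp
          ring
        rw [hexp]
        apply div_pos _ (by positivity)
        have hne : Real.cos y - 1 ≠ 0 := by linarith
        nlinarith [pow_pos (abs_pos.2 hne) 2, sq_abs (Real.cos y - 1)]
    have := hf h0Icc hxIcc h0
    simpa using this
  · -- upper bound via strict mono of g
    have hg : StrictMonoOn (fun t => t ^ 5 / 10 - ((2 * Real.sin t + Real.tan t) / 3 - t))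
        (Set.Icc 0 (Real.pi/4)) := by
      apply strictMonoOn_of_deriv_pos (convex_Icc _ _)
      · apply ContinuousOn.sub (by fun_prop)
        apply ContinuousOn.sub _ (by fun_prop)
        apply ContinuousOn.div_const
        apply ContinuousOn.add (by fun_prop)
        exact fun y hy => (Real.continuousAt_tan.2 (ne_of_gt (snell_cos_pos hy))).continuousWithinAt
      · intro y hy
        rw [interior_Icc] at hy
        obtain ⟨hc0, hc1, hcq, hsq⟩ := key y hy
        rw [(snell_hasDerivAt_g (ne_of_gt hc0)).deriv]
        have h2 : (0:ℝ) < Real.cos y ^ 2 := by positivity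
        have hy0 := hy.1
        have hexp : 5 * y ^ 4 / 10 - ((2 * Real.cos y + 1 / Real.cos y ^ 2) / 3 - 1)
            = ((3/2 * y^4 * Real.cos y ^2 + 3 * Real.cos y ^ 2 - 2 * Real.cos y ^3 - 1)) / (3 * Real.cos y ^ 2) := by
          field_simp
          ring
        rw [hexp]
        apply div_pos _ (by positivity)
        have hd : 0 < 1 - Real.cos y := by linarith
        have hy4 : 0 < y ^ 4 := by positivity
        have hd2 : (1 - Real.cos y)^2 < y^4/4 := by nlinarith
        have h3 : (1 - Real.cos y)^2 * (2 * Real.cos y + 1) < 3 * (y^4/4) := by nlinarith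
        have h4 : 3/2 * y^4 * Real.cos y ^ 2 > 3 * (y^4/4) := by nlinarith
        nlinarith [h3, h4]
    have := hg h0Icc hxIcc h0
    simp at this
    linarith
end

section
/- Let C_n := 2·n·sin(π/n) for n ≥ 3. Then C_n + (10/3)·(C_{2n}² − C_n²)/(2·C_{2n} + 3·C_n) > 2π, and C_n + (10/3)·(C_{2n}² − C_n²)/(2·C_{2n} + 3·C_n + (8/9)·(C_{2n} − C_n)²/(2·C_{2n} + 3·C_n)) < 2π. -/
/-!
With `x = π / (2n)` one has `C_n = 4n sin x cos x`, `C_{2n} = 4n sin x` and `2π = 4n x`, and both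
of Huygens' expressions are homogeneous of degree one in `(C_n, C_{2n})`. The two bounds thus
reduce to `3x (2 + 3 cos x) < sin x (10 + 6 cos x - cos² x)` and
`sin x (60 + 134 cos x + 32 cos² x - cos³ x) < x (44 + 92 cos x + 89 cos² x)` for `0 < x ≤ 1`.
Integrating `cos ≤ 1` repeatedly on `[0, x]` traps `sin x` and `cos x` between consecutive Taylor
polynomials; substituting the bounds on the appropriate side, each gap becomes `x⁷` times a
polynomial in `x²` whose constant term dominates the other coefficients.
-/

open Real Finset
open scoped Nat

theorem nonneg_of_hasDerivAt_nonneg {f f' : ℝ → ℝ} (h₀ : 0 ≤ f 0)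
    (hf : ∀ y, HasDerivAt f (f' y) y) (hf' : ∀ y, 0 ≤ y → 0 ≤ f' y) {x : ℝ} (hx : 0 ≤ x) :
    0 ≤ f x := by
  have hmono : MonotoneOn f (Set.Ici 0) :=
    monotoneOn_of_hasDerivWithinAt_nonneg (convex_Ici 0)
      (fun y _ => (hf y).continuousAt.continuousWithinAt)
      (fun y _ => (hf y).hasDerivWithinAt)
      (fun y hy => hf' y (interior_subset hy))
  exact h₀.trans (hmono Set.self_mem_Ici hx hx)

namespace Real

noncomputable def sinTaylor (n : ℕ) (x : ℝ) : ℝ :=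
  ∑ i ∈ range n, (-1) ^ i * x ^ (2 * i + 1) / (2 * i + 1)!

noncomputable def cosTaylor (n : ℕ) (x : ℝ) : ℝ :=
  ∑ i ∈ range n, (-1) ^ i * x ^ (2 * i) / (2 * i)!

theorem hasDerivAt_sinTaylor (n : ℕ) (x : ℝ) : HasDerivAt (sinTaylor n) (cosTaylor n x) x := by
  refine (HasDerivAt.fun_sum fun i _ =>
    ((hasDerivAt_pow (2 * i + 1) x).const_mul ((-1 : ℝ) ^ i)).div_const
      ((2 * i + 1)! : ℝ)).congr_deriv (sum_congr rfl fun i _ => ?_)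
  rw [Nat.factorial_succ]
  push_cast
  field_simp

theorem hasDerivAt_cosTaylor (n : ℕ) (x : ℝ) :
    HasDerivAt (cosTaylor (n + 1)) (-sinTaylor n x) x := by
  have h : cosTaylor (n + 1) = fun y =>
      ∑ i ∈ range n, (-1 : ℝ) ^ (i + 1) * y ^ (2 * i + 2) / (2 * i + 2)! + 1 := by
    ext y
    simp [cosTaylor, sum_range_succ', mul_add]
  rw [h]
  refine ((HasDerivAt.fun_sum fun i _ =>
    ((hasDerivAt_pow (2 * i + 2) x).const_mul ((-1 : ℝ) ^ (i + 1))).div_const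
      ((2 * i + 2)! : ℝ)).add_const 1).congr_deriv ?_
  rw [sinTaylor, ← sum_neg_distrib]
  refine sum_congr rfl fun i _ => ?_
  rw [Nat.factorial_succ (2 * i + 1)]
  push_cast
  field_simp
  ring

theorem sinTaylor_bound_of_cosTaylor_bound {n : ℕ}
    (h : ∀ x, 0 ≤ x → 0 ≤ (-1) ^ n * (cosTaylor (n + 1) x - cos x)) {x : ℝ} (hx : 0 ≤ x) :
    0 ≤ (-1) ^ n * (sinTaylor (n + 1) x - sin x) :=
  nonneg_of_hasDerivAt_nonneg (by simp [sinTaylor])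
    (fun y => ((hasDerivAt_sinTaylor (n + 1) y).sub (hasDerivAt_sin y)).const_mul _) h hx

theorem cosTaylor_bound_of_sinTaylor_bound {n : ℕ}
    (h : ∀ x, 0 ≤ x → 0 ≤ (-1) ^ n * (sinTaylor (n + 1) x - sin x)) {x : ℝ} (hx : 0 ≤ x) :
    0 ≤ (-1) ^ (n + 1) * (cosTaylor (n + 2) x - cos x) := by
  refine nonneg_of_hasDerivAt_nonneg (by simp [cosTaylor, sum_range_succ'])
    (fun y => (((hasDerivAt_cosTaylor (n + 1) y).sub (hasDerivAt_cos y)).const_mul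
      _).congr_deriv ?_) h hx
  ring

theorem cosTaylor_sinTaylor_alternating (n : ℕ) :
    (∀ x, 0 ≤ x → 0 ≤ (-1) ^ n * (cosTaylor (n + 1) x - cos x)) ∧
      ∀ x, 0 ≤ x → 0 ≤ (-1) ^ n * (sinTaylor (n + 1) x - sin x) := by
  induction n with
  | zero =>
    have hcos (x : ℝ) (_ : 0 ≤ x) : 0 ≤ (-1) ^ 0 * (cosTaylor 1 x - cos x) := by
      simpa [cosTaylor] using cos_le_one x
    exact ⟨hcos, fun x => sinTaylor_bound_of_cosTaylor_bound hcos⟩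
  | succ n ih =>
    have hcos (x : ℝ) := cosTaylor_bound_of_sinTaylor_bound ih.2 (x := x)
    exact ⟨hcos, fun x => sinTaylor_bound_of_cosTaylor_bound hcos⟩

variable {x : ℝ}

theorem cos_mem_Icc_cosTaylor (hx : 0 ≤ x) :
    cos x ∈ Set.Icc (cosTaylor 4 x) (cosTaylor 3 x) := by
  have h₂ := (cosTaylor_sinTaylor_alternating 2).1 x hx
  have h₃ := (cosTaylor_sinTaylor_alternating 3).1 x hx
  constructor <;> norm_num at h₂ h₃ <;> linarith

theorem sin_mem_Icc_sinTaylor (hx : 0 ≤ x) :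
    sin x ∈ Set.Icc (sinTaylor 4 x) (sinTaylor 3 x) := by
  have h₂ := (cosTaylor_sinTaylor_alternating 2).2 x hx
  have h₃ := (cosTaylor_sinTaylor_alternating 3).2 x hx
  constructor <;> norm_num at h₂ h₃ <;> linarith

theorem cosTaylor_four_nonneg (hx : x ^ 2 ≤ 1) : 0 ≤ cosTaylor 4 x := by
  norm_num [cosTaylor, sum_range_succ, Nat.factorial]
  nlinarith [pow_le_one₀ (sq_nonneg x) hx (n := 3), pow_nonneg (sq_nonneg x) 2]

theorem cosTaylor_three_le_one (hx : x ^ 2 ≤ 12) : cosTaylor 3 x ≤ 1 := by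
  norm_num [cosTaylor, sum_range_succ, Nat.factorial]
  nlinarith [mul_nonneg (sq_nonneg x) (sub_nonneg.2 hx)]

theorem sinTaylor_four_nonneg (hx₀ : 0 ≤ x) (hx₁ : x ≤ 1) : 0 ≤ sinTaylor 4 x := by
  norm_num [sinTaylor, sum_range_succ, Nat.factorial]
  nlinarith [pow_le_one₀ hx₀ hx₁ (n := 2), pow_le_one₀ hx₀ hx₁ (n := 6), pow_nonneg hx₀ 5]

theorem taylor_lower_margin (hx₀ : 0 < x) (hx₁ : x ≤ 1) :
    3 * x * (2 + 3 * cosTaylor 3 x) <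
      sinTaylor 4 x * (10 + 6 * cosTaylor 4 x - cosTaylor 4 x ^ 2) := by
  have hR : 0 < 17 / 560 - 571 / 60480 * x ^ 2 + 577 / 604800 * x ^ 4 - 79 / 1451520 * x ^ 6
      + 83 / 43545600 * x ^ 8 - 17 / 435456000 * x ^ 10 + 1 / 2612736000 * x ^ 12 := by
    have hx := hx₀.le
    linarith [pow_le_one₀ hx hx₁ (n := 2), pow_le_one₀ hx hx₁ (n := 6),
      pow_le_one₀ hx hx₁ (n := 10), pow_nonneg hx 4, pow_nonneg hx 8, pow_nonneg hx 12]
  have hgap : sinTaylor 4 x * (10 + 6 * cosTaylor 4 x - cosTaylor 4 x ^ 2)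
      - 3 * x * (2 + 3 * cosTaylor 3 x) = x ^ 7 * (17 / 560 - 571 / 60480 * x ^ 2
      + 577 / 604800 * x ^ 4 - 79 / 1451520 * x ^ 6 + 83 / 43545600 * x ^ 8
      - 17 / 435456000 * x ^ 10 + 1 / 2612736000 * x ^ 12) := by
    norm_num [sinTaylor, cosTaylor, sum_range_succ, Nat.factorial]
    ring
  linarith [mul_pos (pow_pos hx₀ 7) hR]

theorem taylor_upper_margin (hx₀ : 0 < x) (hx₁ : x ≤ 1) :
    sinTaylor 3 x * (60 + 134 * cosTaylor 3 x + 32 * cosTaylor 3 x ^ 2 - cosTaylor 3 x ^ 3) <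
      x * (44 + 92 * cosTaylor 4 x + 89 * cosTaylor 4 x ^ 2) := by
  have hR : 0 < 3 / 8 - 143 / 2880 * x ^ 2 - 1 / 1440 * x ^ 4 + 269 / 518400 * x ^ 6
      - 7 / 207360 * x ^ 8 + 1 / 1658880 * x ^ 10 := by
    have hx := hx₀.le
    linarith [pow_le_one₀ hx hx₁ (n := 2), pow_le_one₀ hx hx₁ (n := 4),
      pow_le_one₀ hx hx₁ (n := 8), pow_nonneg hx 6, pow_nonneg hx 10]
  have hgap : x * (44 + 92 * cosTaylor 4 x + 89 * cosTaylor 4 x ^ 2)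
      - sinTaylor 3 x * (60 + 134 * cosTaylor 3 x + 32 * cosTaylor 3 x ^ 2 - cosTaylor 3 x ^ 3)
      = x ^ 7 * (3 / 8 - 143 / 2880 * x ^ 2 - 1 / 1440 * x ^ 4 + 269 / 518400 * x ^ 6
      - 7 / 207360 * x ^ 8 + 1 / 1658880 * x ^ 10) := by
    norm_num [sinTaylor, cosTaylor, sum_range_succ, Nat.factorial]
    ring
  linarith [mul_pos (pow_pos hx₀ 7) hR]

end Real

theorem sq_mul_div_mul {K : Type*} [Field K] (r p q : K) : r ^ 2 * p / (r * q) = r * (p / q) := by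
  rcases eq_or_ne r 0 with rfl | hr
  · simp
  · rw [sq, mul_assoc, mul_div_mul_left _ _ hr, mul_div_assoc]

/-- Huygens' approximations `huygensLower a b` and `huygensUpper a b` to the circumference, read
with `a = C_n` and `b = C_{2n}`. -/
noncomputable def huygensLower (a b : ℝ) : ℝ := a + 10 / 3 * (b ^ 2 - a ^ 2) / (2 * b + 3 * a)

noncomputable def huygensUpper (a b : ℝ) : ℝ :=
  a + 10 / 3 * (b ^ 2 - a ^ 2) / (2 * b + 3 * a + 8 / 9 * (b - a) ^ 2 / (2 * b + 3 * a))

theorem huygensLower_mul (r a b : ℝ) : huygensLower (r * a) (r * b) = r * huygensLower a b := by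
  rw [huygensLower, huygensLower,
    show 10 / 3 * ((r * b) ^ 2 - (r * a) ^ 2) = r ^ 2 * (10 / 3 * (b ^ 2 - a ^ 2)) by ring,
    show 2 * (r * b) + 3 * (r * a) = r * (2 * b + 3 * a) by ring, sq_mul_div_mul]
  ring

theorem huygensUpper_mul (r a b : ℝ) : huygensUpper (r * a) (r * b) = r * huygensUpper a b := by
  rw [huygensUpper, huygensUpper,
    show 10 / 3 * ((r * b) ^ 2 - (r * a) ^ 2) = r ^ 2 * (10 / 3 * (b ^ 2 - a ^ 2)) by ring,
    show 8 / 9 * (r * b - r * a) ^ 2 = r ^ 2 * (8 / 9 * (b - a) ^ 2) by ring,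
    show 2 * (r * b) + 3 * (r * a) = r * (2 * b + 3 * a) by ring, sq_mul_div_mul, ← mul_add,
    sq_mul_div_mul]
  ring

theorem huygensLower_one {c : ℝ} (hc : 2 + 3 * c ≠ 0) :
    huygensLower c 1 = (10 + 6 * c - c ^ 2) / (3 * (2 + 3 * c)) := by
  -- `field_simp` only finds the side condition in its own normal form `2 + c * 3`
  rw [mul_comm 3 c] at hc ⊢
  simp only [huygensLower, one_pow, mul_one]
  field_simp
  ring

theorem huygensUpper_one {c : ℝ} (hc : 2 + 3 * c ≠ 0) :
    huygensUpper c 1 = (60 + 134 * c + 32 * c ^ 2 - c ^ 3) / (44 + 92 * c + 89 * c ^ 2) := by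
  have hQ : 44 + c * 92 + c ^ 2 * 89 ≠ 0 := by nlinarith [sq_nonneg (89 * c + 46)]
  rw [mul_comm 3 c] at hc
  simp only [huygensUpper, one_pow, mul_one]
  field_simp
  ring

namespace Real

variable {x : ℝ}

theorem lt_huygensLower_sin_mul_cos (hx₀ : 0 < x) (hx₁ : x ≤ 1) :
    x < huygensLower (sin x * cos x) (sin x) := by
  obtain ⟨hcL, hcU⟩ := cos_mem_Icc_cosTaylor hx₀.le
  obtain ⟨hsL, -⟩ := sin_mem_Icc_sinTaylor hx₀.le
  have hcL₀ := cosTaylor_four_nonneg (x := x) (by nlinarith)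
  have hsL₀ := sinTaylor_four_nonneg hx₀.le hx₁
  have hc₁ := cos_le_one x
  have hgap : 3 * x * (2 + 3 * cos x) < sin x * (10 + 6 * cos x - cos x ^ 2) := calc
    3 * x * (2 + 3 * cos x) ≤ 3 * x * (2 + 3 * cosTaylor 3 x) := by gcongr
    _ < sinTaylor 4 x * (10 + 6 * cosTaylor 4 x - cosTaylor 4 x ^ 2) :=
      taylor_lower_margin hx₀ hx₁
    _ ≤ sin x * (10 + 6 * cos x - cos x ^ 2) := by
      refine mul_le_mul hsL ?_ (by nlinarith) (hsL₀.trans hsL)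
      nlinarith [mul_nonneg (sub_nonneg.2 hcL) (by linarith : 0 ≤ 6 - cos x - cosTaylor 4 x)]
  have hc : 0 < 2 + 3 * cos x := by linarith
  have hmul := huygensLower_mul (sin x) (cos x) 1
  rw [mul_one] at hmul
  rw [hmul, huygensLower_one hc.ne', mul_div_assoc', lt_div_iff₀ (by positivity)]
  linarith

theorem huygensUpper_sin_mul_cos_lt (hx₀ : 0 < x) (hx₁ : x ≤ 1) :
    huygensUpper (sin x * cos x) (sin x) < x := by
  obtain ⟨hcL, hcU⟩ := cos_mem_Icc_cosTaylor hx₀.le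
  obtain ⟨hsL, hsU⟩ := sin_mem_Icc_sinTaylor hx₀.le
  have hcL₀ := cosTaylor_four_nonneg (x := x) (by nlinarith)
  have hcU₁ := cosTaylor_three_le_one (x := x) (by nlinarith)
  have hsL₀ := sinTaylor_four_nonneg hx₀.le hx₁
  have hgap : sin x * (60 + 134 * cos x + 32 * cos x ^ 2 - cos x ^ 3) <
      x * (44 + 92 * cos x + 89 * cos x ^ 2) := calc
    sin x * (60 + 134 * cos x + 32 * cos x ^ 2 - cos x ^ 3) ≤
        sinTaylor 3 x *
          (60 + 134 * cosTaylor 3 x + 32 * cosTaylor 3 x ^ 2 - cosTaylor 3 x ^ 3) := by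
      refine mul_le_mul hsU ?_ (by nlinarith) (by linarith)
      nlinarith [mul_nonneg (sub_nonneg.2 hcU)
        (by nlinarith : 0 ≤ 134 + 32 * (cos x + cosTaylor 3 x)
          - (cos x ^ 2 + cos x * cosTaylor 3 x + cosTaylor 3 x ^ 2))]
    _ < x * (44 + 92 * cosTaylor 4 x + 89 * cosTaylor 4 x ^ 2) := taylor_upper_margin hx₀ hx₁
    _ ≤ x * (44 + 92 * cos x + 89 * cos x ^ 2) := by gcongr
  have hc : 0 < 2 + 3 * cos x := by linarith
  have hmul := huygensUpper_mul (sin x) (cos x) 1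
  rw [mul_one] at hmul
  rw [hmul, huygensUpper_one hc.ne', mul_div_assoc', div_lt_iff₀ (by nlinarith)]
  linarith

end Real

theorem huygens_refined_bounds (n : ℕ) (hn : 3 ≤ n) :
    (let C : ℕ → ℝ := fun m => 2 * m * Real.sin (Real.pi / m)
     C n + (10 / 3) * ((C (2 * n)) ^ 2 - (C n) ^ 2) /
        (2 * C (2 * n) + 3 * C n) > 2 * Real.pi) ∧
    (let C : ℕ → ℝ := fun m => 2 * m * Real.sin (Real.pi / m)
     C n + (10 / 3) * ((C (2 * n)) ^ 2 - (C n) ^ 2) /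
        (2 * C (2 * n) + 3 * C n +
          (8 / 9) * (C (2 * n) - C n) ^ 2 / (2 * C (2 * n) + 3 * C n)) < 2 * Real.pi) := by
  have hn₃ : (3 : ℝ) ≤ n := by exact_mod_cast hn
  set x := π / (2 * n) with hx
  have hx₀ : 0 < x := by positivity
  have hx₁ : x ≤ 1 := (div_le_one (by positivity)).2 (by linarith [pi_le_four])
  have hCn : 2 * (n : ℝ) * sin (π / n) = 4 * n * (sin x * cos x) := by
    rw [show π / n = 2 * x by rw [hx]; field_simp, sin_two_mul]
    ring
  have hC2n : 2 * ((2 * n : ℕ) : ℝ) * sin (π / ((2 * n : ℕ) : ℝ)) = 4 * n * sin x := by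
    push_cast
    ring
  have hπ : 2 * π = 4 * n * x := by rw [hx]; field_simp; ring
  dsimp only
  rw [hCn, hC2n, hπ]
  constructor
  · change _ < huygensLower _ _
    rw [huygensLower_mul]
    exact mul_lt_mul_of_pos_left (lt_huygensLower_sin_mul_cos hx₀ hx₁) (by positivity)
  · change huygensUpper _ _ < _
    rw [huygensUpper_mul]
    exact mul_lt_mul_of_pos_left (huygensUpper_sin_mul_cos_lt hx₀ hx₁) (by positivity)
end
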